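/- arXiv:1808.09641 — 5 statements merged into one kernel-verified Lean document; each statement's English description precedes it below -/
import Mathlib

section
/- Let c, d ∈ ℝ with c² + d² ≠ 0 and let f : ℝ → ℝ be a smooth function, not identically zero, satisfying (f′)² = (c−d)f² + c and f″ = (c−d)f on all of ℝ. Then there exists x₀ ∈ ℝ with f(x₀)² = 1 if and only if 2c ≥ d. -/
noncomputable section

private lemma L1 (u : ℝ → ℝ) (hu : Differentiable ℝ u) (m : ℝ) {x y : ℝ} (hxy : x ≤ y)
    (h : ∀ t, x ≤ t → t ≤ y → m ≤ deriv u t) : u x + m * (y - x) ≤ u y := by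
  have hv : ∀ t : ℝ, HasDerivAt (fun s => u s - m * s) (deriv u t - m) t := by
    intro t
    have h1 := (hu t).hasDerivAt
    have h2 : HasDerivAt (fun s : ℝ => m * s) m t := by
      simpa using (hasDerivAt_id t).const_mul m
    exact h1.sub h2
  have key : MonotoneOn (fun s => u s - m * s) (Set.Icc x y) := by
    apply monotoneOn_of_deriv_nonneg (convex_Icc x y)
    · exact (hu.continuous.sub (continuous_const.mul continuous_id)).continuousOn
    · intro t _
      exact ((hv t).differentiableAt).differentiableWithinAt
    · intro t ht
      rw [(hv t).deriv]
      rw [interior_Icc] at ht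
      have := h t ht.1.le ht.2.le
      linarith
  have := key ⟨le_refl x, hxy⟩ ⟨hxy, le_refl y⟩ hxy
  simp only at this
  linarith

private lemma L2 (u : ℝ → ℝ) (hu : Differentiable ℝ u) (m : ℝ) {x y : ℝ} (hxy : x ≤ y)
    (h : ∀ t, x ≤ t → t ≤ y → deriv u t ≤ m) : u y ≤ u x + m * (y - x) := by
  have := L1 (fun s => -u s) hu.neg (-m) hxy (by
    intro t h1 h2
    rw [deriv.fun_neg]
    linarith [h t h1 h2])
  linarith

private lemma sign_const (u : ℝ → ℝ) (hu : Continuous u) (h0 : ∀ x, u x ≠ 0)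
    (ha : 0 < u 0) : ∀ x, 0 < u x := by
  intro x
  by_contra hcon
  push_neg at hcon
  have hx : u x < 0 := lt_of_le_of_ne hcon (h0 x)
  have hmem : (0 : ℝ) ∈ Set.Icc (u x) (u 0) := ⟨hx.le, ha.le⟩
  obtain ⟨t, ht⟩ := intermediate_value_univ x 0 hu hmem
  exact h0 t ht

private lemma no_pos_deriv (k : ℝ) (hk : k < 0) (f : ℝ → ℝ)
    (hF : Differentiable ℝ f) (hF' : Differentiable ℝ (deriv f))
    (hode2 : ∀ x, deriv (deriv f) x = k * f x)
    (hpos : ∀ x, 0 < deriv f x) : False := by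
  have h1 : ∃ x₁, 0 < f x₁ := by
    by_contra hcon
    push_neg at hcon
    have hdd : ∀ t : ℝ, (0:ℝ) ≤ t → t ≤ (1 - f 0)/(deriv f 0) → (0:ℝ) ≤ deriv (deriv f) t := by
      intro t _ _
      rw [hode2]
      nlinarith [hcon t]
    set x := (1 - f 0)/(deriv f 0) with hxdef
    have hx0 : (0:ℝ) ≤ x := div_nonneg (by linarith [hcon 0]) (hpos 0).le
    have hmono : ∀ t, 0 ≤ t → t ≤ x → deriv f 0 ≤ deriv f t := by
      intro t ht htx
      have := L1 (deriv f) hF' 0 ht (fun s hs hst => hdd s hs (le_trans hst htx))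
      linarith
    have hfx := L1 f hF (deriv f 0) hx0 hmono
    have hd0 : deriv f 0 * x = 1 - f 0 := by
      rw [hxdef, mul_div_cancel₀ _ (hpos 0).ne']
    nlinarith [hcon x]
  obtain ⟨x₁, hx₁⟩ := h1
  have hge : ∀ x, x₁ ≤ x → f x₁ ≤ f x := by
    intro x hx
    have := L1 f hF 0 hx (fun t _ _ => (hpos t).le)
    linarith
  have hden : 0 < -(k * f x₁) := by nlinarith
  obtain ⟨y, hydef⟩ : ∃ y : ℝ, y = x₁ + (deriv f x₁ + 1)/(-(k * f x₁)) := ⟨_, rfl⟩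
  have hxy : x₁ ≤ y := by
    have : 0 ≤ (deriv f x₁ + 1)/(-(k * f x₁)) := div_nonneg (by linarith [hpos x₁]) hden.le
    linarith
  have hdd : ∀ t, x₁ ≤ t → t ≤ y → deriv (deriv f) t ≤ k * f x₁ := by
    intro t ht _
    rw [hode2]
    nlinarith [hge t ht]
  have hL := L2 (deriv f) hF' (k * f x₁) hxy hdd
  have hne : k * f x₁ ≠ 0 := by nlinarith
  have hmul : k * f x₁ * (y - x₁) = -(deriv f x₁ + 1) := by
    rw [hydef, add_sub_cancel_left, div_neg, mul_neg, mul_div_cancel₀ _ hne]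
  linarith [hpos y]

private lemma exists_deriv_zero (k : ℝ) (hk : k < 0) (f : ℝ → ℝ)
    (hF : Differentiable ℝ f) (hF' : Differentiable ℝ (deriv f))
    (hode2 : ∀ x, deriv (deriv f) x = k * f x) : ∃ x, deriv f x = 0 := by
  by_contra h
  push_neg at h
  rcases (h 0).lt_or_gt with hneg | hpos
  · have hdneg : (deriv fun t => -f t) = fun t => -deriv f t := funext fun t => deriv.fun_neg
    have hF'n : Differentiable ℝ (deriv fun t => -f t) := by rw [hdneg]; exact hF'.neg
    have hode2n : ∀ x, deriv (deriv fun t => -f t) x = k * (-f x) := by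
      intro x
      rw [hdneg, deriv.fun_neg, hode2]
      ring
    have hposn : ∀ x, 0 < deriv (fun t => -f t) x := by
      have := sign_const (fun t => -(deriv f t)) (hF'.continuous.neg)
        (fun t => by simpa using h t) (by simpa using hneg)
      intro x
      rw [hdneg]
      exact this x
    exact no_pos_deriv k hk (fun t => -f t) hF.neg hF'n hode2n hposn
  · exact no_pos_deriv k hk f hF hF' hode2 (sign_const _ hF'.continuous h hpos)

private lemma noA_neg (k : ℝ) (hk : k < 0) (f : ℝ → ℝ)
    (hF : Differentiable ℝ f) (hF' : Differentiable ℝ (deriv f))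
    (hode2 : ∀ x, deriv (deriv f) x = k * f x)
    (hbig : ∀ x, 1 < f x) : False := by
  have hdd : ∀ t : ℝ, deriv (deriv f) t ≤ k := fun t => by
    rw [hode2]; nlinarith [hbig t]
  set X := max 0 ((deriv f 0 + 1)/(-k)) with hXdef
  have hX0 : (0:ℝ) ≤ X := le_max_left _ _
  have hXb : (deriv f 0 + 1)/(-k) ≤ X := le_max_right _ _
  have hf'X : ∀ x, X ≤ x → deriv f x ≤ -1 := by
    intro x hx
    have hL := L2 (deriv f) hF' k (le_trans hX0 hx) (fun t _ _ => hdd t)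
    have hkx : k * x ≤ -(deriv f 0 + 1) := by
      have hx' : (deriv f 0 + 1)/(-k) ≤ x := le_trans hXb hx
      have h2 := (div_le_iff₀ (by linarith : (0:ℝ) < -k)).mp hx'
      nlinarith
    nlinarith
  have hXy : X ≤ X + f X := by nlinarith [hbig X]
  have key := L2 f hF (-1) hXy (fun t ht _ => hf'X t ht)
  nlinarith [hbig (X + f X)]

private lemma noA_pos (k : ℝ) (hk : 0 < k) (f : ℝ → ℝ)
    (hF : Differentiable ℝ f) (hF' : Differentiable ℝ (deriv f))
    (hode2 : ∀ x, deriv (deriv f) x = k * f x)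
    (hbig : ∀ x, 1 < f x) (hnz : ∀ x, deriv f x ≠ 0) : False := by
  have hdd : ∀ t : ℝ, k ≤ deriv (deriv f) t := fun t => by
    rw [hode2]; nlinarith [hbig t]
  set a := (|deriv f 0| + 1)/k with hadef
  have ha0 : (0:ℝ) ≤ a := by positivity
  have hka : k * a = |deriv f 0| + 1 := by rw [hadef]; field_simp
  have h1 : 0 < deriv f a := by
    have := L1 (deriv f) hF' k ha0 (fun t _ _ => hdd t)
    have habs := neg_abs_le (deriv f 0)
    nlinarith
  have h2 : deriv f (-a) < 0 := by
    have := L1 (deriv f) hF' k (by linarith : -a ≤ (0:ℝ)) (fun t _ _ => hdd t)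
    have habs := le_abs_self (deriv f 0)
    nlinarith
  have hmem : (0:ℝ) ∈ Set.Icc (deriv f (-a)) (deriv f a) := ⟨h2.le, h1.le⟩
  obtain ⟨t, ht⟩ := intermediate_value_univ (-a) a hF'.continuous hmem
  exact hnz t ht

private lemma exp_sol (s : ℝ) (u : ℝ → ℝ)
    (hu : ∀ x, HasDerivAt u (s * u x) x) : ∀ x, u x = u 0 * Real.exp (s * x) := by
  have hw : ∀ x, HasDerivAt (fun t => u t * Real.exp (-s * t)) 0 x := by
    intro x
    have he : HasDerivAt (fun t : ℝ => Real.exp (-s * t)) (-s * Real.exp (-s * x)) x := by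
      have := ((hasDerivAt_id x).const_mul (-s)).exp
      simpa [mul_comm] using this
    have := (hu x).mul he
    refine this.congr_deriv ?_
    ring
  have hconst := is_const_of_deriv_eq_zero
    (fun x => (hw x).differentiableAt) (fun x => (hw x).deriv)
  intro x
  have h := hconst x 0
  simp only [mul_zero, Real.exp_zero, mul_one] at h
  have hprod : Real.exp (-s * x) * Real.exp (s * x) = 1 := by
    rw [← Real.exp_add]; simp
  calc u x = u x * (Real.exp (-s * x) * Real.exp (s * x)) := by rw [hprod]; ring
    _ = (u x * Real.exp (-s * x)) * Real.exp (s * x) := by ring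
    _ = u 0 * Real.exp (s * x) := by rw [h]

private lemma bounded_exp_zero (s : ℝ) (hs : 0 < s) (M C : ℝ)
    (h : ∀ x, |C * Real.exp (s * x)| ≤ M) : C = 0 := by
  by_contra hC
  have hCpos : 0 < |C| := abs_pos.mpr hC
  set x := M / (|C| * s) with hxdef
  have hx : |C| * (s * x) = M := by
    rw [hxdef]; field_simp
  have hMpos : 0 ≤ M := le_trans (abs_nonneg _) (h 0)
  have hexp : s * x + 1 ≤ Real.exp (s * x) := Real.add_one_le_exp _
  have habs : |C * Real.exp (s * x)| = |C| * Real.exp (s * x) := by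
    rw [abs_mul, abs_of_pos (Real.exp_pos _)]
  have hb := h x
  rw [habs] at hb
  nlinarith [Real.exp_pos (s * x)]

private lemma bounded_forces_zero (k c : ℝ) (hk : 0 < k) (f : ℝ → ℝ)
    (hF : Differentiable ℝ f) (hF' : Differentiable ℝ (deriv f))
    (hode1 : ∀ x, (deriv f x) ^ 2 = k * (f x) ^ 2 + c)
    (hode2 : ∀ x, deriv (deriv f) x = k * f x)
    (hb : ∀ x, (f x) ^ 2 < 1) : ∀ x, f x = 0 := by
  set s := Real.sqrt k with hsdef
  have hs2 : s ^ 2 = k := Real.sq_sqrt hk.le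
  have hs0 : 0 < s := Real.sqrt_pos.mpr hk
  have hfab : ∀ x, |f x| ≤ 1 := by
    intro x
    nlinarith [sq_abs (f x), hb x, abs_nonneg (f x)]
  have hf'ab : ∀ x, |deriv f x| ≤ Real.sqrt (k + |c|) := by
    intro x
    have h1 : (deriv f x) ^ 2 ≤ k + |c| := by
      have := hode1 x
      nlinarith [hb x, le_abs_self c]
    calc |deriv f x| = Real.sqrt ((deriv f x) ^ 2) := by
          rw [Real.sqrt_sq_eq_abs]
      _ ≤ Real.sqrt (k + |c|) := Real.sqrt_le_sqrt h1
  set M := Real.sqrt (k + |c|) + s with hMdef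
  have hu : ∀ x, HasDerivAt (fun t => deriv f t + s * f t) (s * (deriv f x + s * f x)) x := by
    intro x
    have h1 := (hF' x).hasDerivAt
    have h2 := ((hF x).hasDerivAt.const_mul s)
    have h3 := h1.add h2
    refine h3.congr_deriv ?_
    rw [hode2 x]
    linear_combination -(f x) * hs2
  have hv : ∀ x, HasDerivAt (fun t => deriv f t - s * f t) (-s * (deriv f x - s * f x)) x := by
    intro x
    have h1 := (hF' x).hasDerivAt
    have h2 := ((hF x).hasDerivAt.const_mul s)
    have h3 := h1.sub h2
    refine h3.congr_deriv ?_
    rw [hode2 x]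
    linear_combination -(f x) * hs2
  have huexp := exp_sol s (fun t => deriv f t + s * f t) hu
  have hvexp := exp_sol (-s) (fun t => deriv f t - s * f t) hv
  have hubound : ∀ x, |deriv f x + s * f x| ≤ M := by
    intro x
    calc |deriv f x + s * f x| ≤ |deriv f x| + |s * f x| := abs_add_le _ _
      _ ≤ Real.sqrt (k + |c|) + s * 1 := by
          refine add_le_add (hf'ab x) ?_
          rw [abs_mul, abs_of_pos hs0]
          exact mul_le_mul_of_nonneg_left (hfab x) hs0.le
      _ = M := by rw [hMdef]; ring
  have hvbound : ∀ x, |deriv f x - s * f x| ≤ M := by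
    intro x
    calc |deriv f x - s * f x| ≤ |deriv f x| + |s * f x| := abs_sub _ _
      _ ≤ Real.sqrt (k + |c|) + s * 1 := by
          refine add_le_add (hf'ab x) ?_
          rw [abs_mul, abs_of_pos hs0]
          exact mul_le_mul_of_nonneg_left (hfab x) hs0.le
      _ = M := by rw [hMdef]; ring
  have hu0 : deriv f 0 + s * f 0 = 0 := by
    have := bounded_exp_zero s hs0 M (deriv f 0 + s * f 0) (by
      intro x
      rw [← huexp x]
      exact hubound x)
    simpa using this
  have hv0 : deriv f 0 - s * f 0 = 0 := by
    have := bounded_exp_zero s hs0 M (deriv f 0 - s * f 0) (by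
      intro x
      have h1 := hvexp (-x)
      have h2 : -s * (-x) = s * x := by ring
      rw [h2] at h1
      rw [← h1]
      exact hvbound (-x))
    simpa using this
  intro x
  have h1 := huexp x
  have h2 := hvexp x
  rw [hu0] at h1
  rw [hv0] at h2
  simp only [zero_mul] at h1 h2
  nlinarith [h1, h2, hs0]

private lemma claimA (c d : ℝ) (hd : d ≤ 2*c) (hk : c - d ≠ 0) (f : ℝ → ℝ)
    (hF : Differentiable ℝ f) (hF' : Differentiable ℝ (deriv f))
    (hode1 : ∀ x, (deriv f x)^2 = (c-d) * (f x)^2 + c)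
    (hode2 : ∀ x, deriv (deriv f) x = (c-d) * f x)
    (hbig : ∀ x, 1 < f x) : False := by
  rcases hk.lt_or_gt with h | h
  · exact noA_neg (c-d) h f hF hF' hode2 hbig
  · refine noA_pos (c-d) h f hF hF' hode2 hbig ?_
    intro x hx
    have h1 := hode1 x
    rw [hx] at h1
    norm_num at h1
    have hf2 : 1 < f x ^ 2 := by nlinarith [hbig x]
    nlinarith [mul_pos h (by linarith : (0:ℝ) < f x ^ 2 - 1)]

/-- For the f-ODE system (f′)² = (c−d)f² + c, f″ = (c−d)f with c² + d² ≠ 0 and f not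
identically zero, there is x₀ with f(x₀)² = 1 if and only if 2c ≥ d. -/
theorem fODE_value_one_iff (c d : ℝ) (hcd : c ^ 2 + d ^ 2 ≠ 0)
    (f : ℝ → ℝ) (hf : ContDiff ℝ (⊤ : ℕ∞) f) (hf0 : ¬ (∀ x : ℝ, f x = 0))
    (hode1 : ∀ x : ℝ, (deriv f x) ^ 2 = (c - d) * (f x) ^ 2 + c)
    (hode2 : ∀ x : ℝ, deriv (deriv f) x = (c - d) * f x) :
    (∃ x₀ : ℝ, (f x₀) ^ 2 = 1) ↔ d ≤ 2 * c := by
  have hF : Differentiable ℝ f := hf.differentiable (by simp)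
  have hfi : ContDiff ℝ ((⊤:ℕ∞) : WithTop ℕ∞) f := hf.of_le (by simp)
  have hF' : Differentiable ℝ (deriv f) :=
    (contDiff_infty_iff_deriv.mp hfi).2.differentiable (by simp)
  constructor
  · rintro ⟨x₀, hx₀⟩
    have h := hode1 x₀
    rw [hx₀] at h
    nlinarith [sq_nonneg (deriv f x₀)]
  · intro hd
    rcases eq_or_ne (c - d) 0 with hk0 | hk
    · -- linear case: c = d ≠ 0, f(x) = f(0) + s x with s² = c
      have hceqd : c = d := by linarith [sub_eq_zero.mp hk0]
      have hcne : c ≠ 0 := by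
        intro h0
        apply hcd
        rw [h0, ← hceqd, h0]
        ring
      have hdd0 : ∀ x : ℝ, deriv (deriv f) x = 0 := by
        intro x
        rw [hode2 x, hk0, zero_mul]
      have hconst := is_const_of_deriv_eq_zero hF' hdd0
      set s := deriv f 0 with hsdef
      have hs2 : s ^ 2 = c := by
        have := hode1 0
        rw [hk0] at this
        simpa using this
      have hsne : s ≠ 0 := by
        intro h0
        rw [h0] at hs2
        apply hcne
        simpa using hs2.symm
      have hp : ∀ x : ℝ, HasDerivAt (fun t => f t - s * t) (deriv f x - s) x := by
        intro x
        exact (hF x).hasDerivAt.sub (by simpa using (hasDerivAt_id x).const_mul s)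
      have hlin := is_const_of_deriv_eq_zero (fun x => (hp x).differentiableAt)
        (fun x => by rw [(hp x).deriv, hconst x 0, sub_self])
      have hfx : ∀ x : ℝ, f x = f 0 + s * x := by
        intro x
        have := hlin x 0
        simp only [mul_zero, sub_zero] at this
        linarith
      refine ⟨(1 - f 0) / s, ?_⟩
      rw [hfx ((1 - f 0) / s), mul_div_cancel₀ _ hsne]
      norm_num
    · have A : ∃ a, (f a) ^ 2 ≤ 1 := by
        by_contra hA
        push_neg at hA
        have hfne : ∀ x, f x ≠ 0 := by
          intro x hx
          have := hA x
          rw [hx] at this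
          norm_num at this
        rcases (hfne 0).lt_or_gt with hneg | hpos
        · have hnepos : ∀ x, 0 < -f x := sign_const (fun t => -f t) hf.continuous.neg
            (fun t => neg_ne_zero.mpr (hfne t)) (by simpa using neg_pos.mpr hneg)
          have hbig : ∀ x, 1 < -f x := fun x => by nlinarith [hnepos x, hA x]
          have hdneg : (deriv fun t => -f t) = fun t => -deriv f t := funext fun t => deriv.fun_neg
          refine claimA c d hd hk (fun t => -f t) hF.neg (by rw [hdneg]; exact hF'.neg) ?_ ?_ hbig
          · intro x
            rw [hdneg]
            simpa using hode1 x
          · intro x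
            rw [hdneg, deriv.fun_neg, hode2 x]
            ring
        · have hppos : ∀ x, 0 < f x := sign_const f hf.continuous hfne hpos
          exact claimA c d hd hk f hF hF' hode1 hode2 (fun x => by nlinarith [hppos x, hA x])
      have B : ∃ b, 1 ≤ (f b) ^ 2 := by
        by_contra hB
        push_neg at hB
        rcases hk.lt_or_gt with h | h
        · obtain ⟨x₁, hx₁⟩ := exists_deriv_zero (c - d) h f hF hF' hode2
          have h1 := hode1 x₁
          rw [hx₁] at h1
          norm_num at h1
          nlinarith [hB x₁]
        · exact hf0 (bounded_forces_zero (c - d) c h f hF hF' hode1 hode2 hB)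
      obtain ⟨a, ha⟩ := A
      obtain ⟨b, hb⟩ := B
      have hgc : Continuous fun x => (f x) ^ 2 := hf.continuous.pow 2
      obtain ⟨x₀, hx₀⟩ := intermediate_value_univ a b hgc ⟨ha, hb⟩
      exact ⟨x₀, hx₀⟩
end
end

section
/- Let c, d ∈ ℝ with c < 0 and d < 0. If f : ℝ → ℝ is a smooth function satisfying (f′)² = (c−d)f² + c and f″ = (c−d)f on all of ℝ, then there exists x₀ ∈ ℝ with f′(x₀) = 0; likewise, if g : ℝ → ℝ is a smooth function satisfying (g′)² = (c−d)g² + d and g″ = (c−d)g on all of ℝ, then there exists y₀ ∈ ℝ with g′(y₀) = 0. -/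
noncomputable section

/-- If the second derivative is bounded below by ε > 0, the first derivative vanishes
somewhere. -/
lemma key_aux (f : ℝ → ℝ) (ε : ℝ) (hε : 0 < ε) (hf : ContDiff ℝ (⊤ : ℕ∞) f)
    (hb : ∀ x, ε ≤ deriv (deriv f) x) : ∃ x₀ : ℝ, deriv f x₀ = 0 := by
  have hf2 : ContDiff ℝ ((⊤ : ℕ∞) : WithTop ℕ∞) f := hf.of_le (by simp)
  obtain ⟨hdiff, hf'⟩ := contDiff_infty_iff_deriv.mp hf2
  have hd1 : Differentiable ℝ (deriv f) := hf'.differentiable (by simp)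
  set A : ℝ := (|deriv f 0| + 1) / ε with hA
  have hApos : 0 < A := by positivity
  have hεA : ε * A = |deriv f 0| + 1 := by
    rw [hA]; field_simp
  have hmono : Monotone (fun x => deriv f x - ε * x) := by
    have hdiffh : Differentiable ℝ (fun x => deriv f x - ε * x) :=
      hd1.sub (differentiable_id.const_mul ε)
    apply monotone_of_deriv_nonneg hdiffh
    intro x
    have hh : HasDerivAt (fun x => deriv f x - ε * x) (deriv (deriv f) x - ε * 1) x :=
      (hd1 x).hasDerivAt.sub ((hasDerivAt_id x).const_mul ε)
    rw [hh.deriv]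
    linarith [hb x]
  have h1 := hmono (le_of_lt hApos)
  have h2 := hmono (by linarith : -A ≤ (0:ℝ))
  simp only [mul_zero, sub_zero, mul_neg, sub_neg_eq_add] at h1 h2
  have hpos : 0 < deriv f A := by
    have := neg_abs_le (deriv f 0)
    nlinarith
  have hneg : deriv f (-A) < 0 := by
    have := le_abs_self (deriv f 0)
    nlinarith
  have hc : Continuous (deriv f) := hf'.continuous
  have hmem : (0:ℝ) ∈ Set.uIcc (deriv f (-A)) (deriv f A) :=
    Set.mem_uIcc.mpr (Or.inl ⟨le_of_lt hneg, le_of_lt hpos⟩)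
  obtain ⟨x₀, -, hx₀⟩ := intermediate_value_uIcc hc.continuousOn hmem
  exact ⟨x₀, hx₀⟩

/-- Main ODE lemma: (f')² = k f² + e with e < 0 forces a critical point. -/
lemma ode_aux (k e : ℝ) (he : e < 0) (f : ℝ → ℝ) (hf : ContDiff ℝ (⊤ : ℕ∞) f)
    (h1 : ∀ x : ℝ, (deriv f x) ^ 2 = k * (f x) ^ 2 + e)
    (h2 : ∀ x : ℝ, deriv (deriv f) x = k * f x) : ∃ x₀ : ℝ, deriv f x₀ = 0 := by
  have hk : 0 < k := by nlinarith [h1 0, sq_nonneg (deriv f 0), sq_nonneg (f 0)]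
  have hlb : ∀ x, -e ≤ k * (f x) ^ 2 := by
    intro x; nlinarith [h1 x, sq_nonneg (deriv f x)]
  have hne : ∀ x, f x ≠ 0 := by
    intro x hx
    have := hlb x
    rw [hx] at this; nlinarith
  have hcf : Continuous f := hf.continuous
  set s : ℝ := Real.sqrt (-e / k) with hs
  have hek : (0:ℝ) < -e / k := div_pos (by linarith) hk
  have hs0 : 0 < s := Real.sqrt_pos.mpr hek
  have hsqle : ∀ x, s ^ 2 ≤ (f x) ^ 2 := by
    intro x
    have h := hlb x
    have h' : s ^ 2 = -e / k := Real.sq_sqrt hek.le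
    rw [h', div_le_iff₀ hk]
    linarith [mul_comm (f x ^ 2) k]
  set ε : ℝ := k * s with hεdef
  have hε : 0 < ε := by positivity
  -- f has constant sign
  rcases lt_or_gt_of_ne (hne 0) with hneg0 | hpos0
  · -- f < 0 everywhere, apply key_aux to -f
    have hfneg : ∀ x, f x < 0 := by
      intro x
      by_contra hx
      push_neg at hx
      have hx' : 0 < f x := lt_of_le_of_ne hx (Ne.symm (hne x))
      have hmem : (0:ℝ) ∈ Set.uIcc (f 0) (f x) :=
        Set.mem_uIcc.mpr (Or.inl ⟨le_of_lt hneg0, le_of_lt hx'⟩)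
      obtain ⟨z, -, hz⟩ := intermediate_value_uIcc hcf.continuousOn hmem
      exact hne z hz
    have hflb : ∀ x, f x ≤ -s := by
      intro x
      have h3 : 0 < s - f x := by linarith [hfneg x, hs0]
      nlinarith [hsqle x, h3]
    have hdneg : deriv (fun x => -f x) = fun x => -deriv f x := by
      funext x
      exact deriv.neg
    obtain ⟨x₀, hx₀⟩ := key_aux (fun x => -f x) ε hε hf.neg (by
      intro x
      rw [hdneg]
      have : deriv (fun x => -deriv f x) x = -deriv (deriv f) x := deriv.neg
      rw [this, h2 x, hεdef]
      nlinarith [hflb x, hk])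
    refine ⟨x₀, ?_⟩
    have hx₀' : -deriv f x₀ = 0 := by simpa using hx₀
    linarith
  · -- f > 0 everywhere
    have hfpos : ∀ x, 0 < f x := by
      intro x
      by_contra hx
      push_neg at hx
      have hx' : f x < 0 := lt_of_le_of_ne hx (hne x)
      have hmem : (0:ℝ) ∈ Set.uIcc (f x) (f 0) :=
        Set.mem_uIcc.mpr (Or.inl ⟨le_of_lt hx', le_of_lt hpos0⟩)
      obtain ⟨z, -, hz⟩ := intermediate_value_uIcc hcf.continuousOn hmem
      exact hne z hz
    have hflb : ∀ x, s ≤ f x := by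
      intro x
      have h3 : 0 < s + f x := by linarith [hfpos x, hs0]
      nlinarith [hsqle x, h3]
    exact key_aux f ε hε hf (by
      intro x
      rw [h2 x, hεdef]
      exact mul_le_mul_of_nonneg_left (hflb x) hk.le)

/-- If c < 0 and d < 0, then any solution f of the f-ODE system has a critical point, and
any solution g of the g-ODE system has a critical point. -/
theorem ODE_critical_point_exists (c d : ℝ) (hc : c < 0) (hd : d < 0) :
    (∀ f : ℝ → ℝ, ContDiff ℝ (⊤ : ℕ∞) f →
      (∀ x : ℝ, (deriv f x) ^ 2 = (c - d) * (f x) ^ 2 + c) →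
      (∀ x : ℝ, deriv (deriv f) x = (c - d) * f x) →
      ∃ x₀ : ℝ, deriv f x₀ = 0) ∧
    (∀ g : ℝ → ℝ, ContDiff ℝ (⊤ : ℕ∞) g →
      (∀ y : ℝ, (deriv g y) ^ 2 = (c - d) * (g y) ^ 2 + d) →
      (∀ y : ℝ, deriv (deriv g) y = (c - d) * g y) →
      ∃ y₀ : ℝ, deriv g y₀ = 0) := by
  constructor
  · intro f hf h1 h2
    exact ode_aux (c - d) c hc f hf h1 h2
  · intro g hg h1 h2
    exact ode_aux (c - d) d hd g hg h1 h2
end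
end

section
/- Let c, d ∈ ℝ with c ≥ 0 and let f : ℝ → ℝ be a smooth function, not identically zero, satisfying (f′)² = (c−d)f² + c and f″ = (c−d)f on ℝ with f(0) = 0. Then c > 0, and there exists ε ∈ {−1, 1} such that f = ε·S, where S : ℝ → ℝ is the unique solution of the linear initial value problem S″ = (c−d)S, S(0) = 0, S′(0) = √c. (Explicitly: f(x) = ±√(c/(c−d))·sinh(√(c−d)·x) if c > d, f(x) = ±√c·x if c = d, and f(x) = ±√(c/(d−c))·sin(√(d−c)·x) if c < d.) -/
noncomputable section

open Set Real

/-- Uniqueness: a C¹ solution of g'' = k g with g(0)=0, g'(0)=0 vanishes. -/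
lemma ode_zero (k : ℝ) (g : ℝ → ℝ) (hg : Differentiable ℝ g) (hg' : Differentiable ℝ (deriv g))
    (hode : ∀ x, deriv (deriv g) x = k * g x) (h0 : g 0 = 0) (h0' : deriv g 0 = 0) :
    ∀ x, g x = 0 := by
  set K : NNReal := ⟨max 1 |k|, le_trans zero_le_one (le_max_left _ _)⟩ with hK
  set v : ℝ → ℝ × ℝ → ℝ × ℝ := fun _ p => (p.2, k * p.1) with hv_def
  have hv : ∀ t, LipschitzWith K (v t) := by
    intro t
    apply LipschitzWith.of_dist_le_mul
    intro p q
    have hd : dist p q = max (dist p.1 q.1) (dist p.2 q.2) := rfl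
    have hd2 : dist (v t p) (v t q) = max (dist p.2 q.2) (dist (k * p.1) (k * q.1)) := rfl
    rw [hd2, hd]
    have hK1 : (K : ℝ) = max 1 |k| := rfl
    have h1 : dist p.2 q.2 ≤ max 1 |k| * max (dist p.1 q.1) (dist p.2 q.2) := by
      nlinarith [le_max_right (dist p.1 q.1) (dist p.2 q.2), le_max_left 1 |k|,
        dist_nonneg (x := p.2) (y := q.2), dist_nonneg (x := p.1) (y := q.1)]
    have h2 : dist (k * p.1) (k * q.1) ≤ max 1 |k| * max (dist p.1 q.1) (dist p.2 q.2) := by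
      have : dist (k * p.1) (k * q.1) = |k| * dist p.1 q.1 := by
        rw [Real.dist_eq, Real.dist_eq, ← mul_sub, abs_mul]
      rw [this]
      have := le_max_left (dist p.1 q.1) (dist p.2 q.2)
      nlinarith [le_max_right (1:ℝ) |k|, abs_nonneg k, dist_nonneg (x := p.1) (y := q.1)]
    rw [hK1]
    exact max_le h1 h2
  set F : ℝ → ℝ × ℝ := fun t => (g t, deriv g t) with hF_def
  have hF' : ∀ t, HasDerivAt F (v t (F t)) t := by
    intro t
    have h1 : HasDerivAt g (deriv g t) t := (hg t).hasDerivAt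
    have h2 : HasDerivAt (deriv g) (k * g t) t := by
      have := (hg' t).hasDerivAt
      rwa [hode t] at this
    exact (h1.prodMk h2)
  intro x
  have key : F x = (0, 0) := by
    have h0F : F 0 = (0, 0) := by simp [hF_def, h0, h0']
    have hx : x ∈ Ioo (-(|x| + 1)) (|x| + 1) := by
      constructor <;> cases abs_cases x <;> nlinarith [abs_nonneg x]
    have h0mem : (0 : ℝ) ∈ Ioo (-(|x| + 1)) (|x| + 1) := by
      constructor <;> nlinarith [abs_nonneg x]
    have := ODE_solution_unique_of_mem_Ioo (s := fun _ => (univ : Set (ℝ × ℝ)))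
      (v := v) (K := K) (f := F) (g := fun _ => ((0 : ℝ), (0 : ℝ)))
      (fun t _ => (hv t).lipschitzOnWith) h0mem
      (fun t _ => ⟨hF' t, trivial⟩)
      (fun t _ => ⟨by convert hasDerivAt_const t ((0:ℝ), (0:ℝ)) using 1; simp [hv_def], trivial⟩)
      h0F
    exact this hx
  have := congrArg Prod.fst key
  simpa [hF_def] using this

lemma contdiff_deriv {g : ℝ → ℝ} (hg : ContDiff ℝ (⊤ : ℕ∞) g) : Differentiable ℝ (deriv g) :=
  ((contDiff_infty_iff_deriv.mp (hg.of_le (by simp))).2).differentiable (by norm_num)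

/-- Uniqueness for the second-order linear IVP. -/
lemma ode_unique (k : ℝ) (g h : ℝ → ℝ) (hg : ContDiff ℝ (⊤ : ℕ∞) g) (hh : ContDiff ℝ (⊤ : ℕ∞) h)
    (hodeg : ∀ x, deriv (deriv g) x = k * g x) (hodeh : ∀ x, deriv (deriv h) x = k * h x)
    (e0 : g 0 = h 0) (e1 : deriv g 0 = deriv h 0) : ∀ x, g x = h x := by
  have hgd : Differentiable ℝ g := hg.differentiable (by simp)
  have hhd : Differentiable ℝ h := hh.differentiable (by simp)
  have hgd' : Differentiable ℝ (deriv g) := contdiff_deriv hg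
  have hhd' : Differentiable ℝ (deriv h) := contdiff_deriv hh
  set p : ℝ → ℝ := fun x => g x - h x with hp
  have hdp : deriv p = fun x => deriv g x - deriv h x := by
    funext x; exact deriv_sub (hgd x) (hhd x)
  have hpd : Differentiable ℝ p := hgd.sub hhd
  have hpd' : Differentiable ℝ (deriv p) := by
    rw [hdp]; exact hgd'.sub hhd'
  have hodep : ∀ x, deriv (deriv p) x = k * p x := by
    intro x
    rw [hdp]
    rw [deriv_fun_sub (hgd' x) (hhd' x), hodeg x, hodeh x]
    ring
  have := ode_zero k p hpd hpd' hodep (by simp [hp, e0]) (by simp [hdp, e1])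
  intro x
  have := this x
  simp [hp] at this
  linarith

/-- Explicit solution data: sinh case. -/
lemma sinh_sol (k A : ℝ) (hk : 0 < k) :
    ContDiff ℝ (⊤ : ℕ∞) (fun x => A * Real.sinh (Real.sqrt k * x)) ∧
    (∀ x, deriv (deriv (fun x => A * Real.sinh (Real.sqrt k * x))) x
      = k * (A * Real.sinh (Real.sqrt k * x))) ∧
    (fun x => A * Real.sinh (Real.sqrt k * x)) 0 = 0 ∧
    deriv (fun x => A * Real.sinh (Real.sqrt k * x)) 0 = A * Real.sqrt k := by
  set a := Real.sqrt k with ha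
  have ha2 : a ^ 2 = k := Real.sq_sqrt hk.le
  have hD : ∀ x, HasDerivAt (fun x => A * Real.sinh (a * x)) (A * a * Real.cosh (a * x)) x := by
    intro x
    have h1 : HasDerivAt (fun x : ℝ => a * x) a x := by
      simpa using (hasDerivAt_id x).const_mul a
    have h2 : HasDerivAt (fun x => Real.sinh (a * x)) (Real.cosh (a * x) * a) x :=
      (Real.hasDerivAt_sinh (a * x)).comp x h1
    have := h2.const_mul A
    exact this.congr_deriv (by ring)
  have hderiv : deriv (fun x => A * Real.sinh (a * x)) = fun x => A * a * Real.cosh (a * x) := by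
    funext x; exact (hD x).deriv
  have hD2 : ∀ x, HasDerivAt (fun x => A * a * Real.cosh (a * x))
      (A * a * a * Real.sinh (a * x)) x := by
    intro x
    have h1 : HasDerivAt (fun x : ℝ => a * x) a x := by
      simpa using (hasDerivAt_id x).const_mul a
    have h2 : HasDerivAt (fun x => Real.cosh (a * x)) (Real.sinh (a * x) * a) x :=
      (Real.hasDerivAt_cosh (a * x)).comp x h1
    have := h2.const_mul (A * a)
    exact this.congr_deriv (by ring)
  refine ⟨?_, ?_, by simp, ?_⟩
  · exact contDiff_const.mul (Real.contDiff_sinh.comp (contDiff_const.mul contDiff_id))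
  · intro x
    rw [hderiv, (hD2 x).deriv, ← ha2]
    ring
  · rw [hderiv]; simp

/-- Explicit solution data: sin case. -/
lemma sin_sol (m A : ℝ) (hm : 0 < m) :
    ContDiff ℝ (⊤ : ℕ∞) (fun x => A * Real.sin (Real.sqrt m * x)) ∧
    (∀ x, deriv (deriv (fun x => A * Real.sin (Real.sqrt m * x))) x
      = (-m) * (A * Real.sin (Real.sqrt m * x))) ∧
    (fun x => A * Real.sin (Real.sqrt m * x)) 0 = 0 ∧
    deriv (fun x => A * Real.sin (Real.sqrt m * x)) 0 = A * Real.sqrt m := by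
  set a := Real.sqrt m with ha
  have ha2 : a ^ 2 = m := Real.sq_sqrt hm.le
  have hD : ∀ x, HasDerivAt (fun x => A * Real.sin (a * x)) (A * a * Real.cos (a * x)) x := by
    intro x
    have h1 : HasDerivAt (fun x : ℝ => a * x) a x := by
      simpa using (hasDerivAt_id x).const_mul a
    have h2 : HasDerivAt (fun x => Real.sin (a * x)) (Real.cos (a * x) * a) x :=
      (Real.hasDerivAt_sin (a * x)).comp x h1
    have := h2.const_mul A
    exact this.congr_deriv (by ring)
  have hderiv : deriv (fun x => A * Real.sin (a * x)) = fun x => A * a * Real.cos (a * x) := by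
    funext x; exact (hD x).deriv
  have hD2 : ∀ x, HasDerivAt (fun x => A * a * Real.cos (a * x))
      (-(A * a * a * Real.sin (a * x))) x := by
    intro x
    have h1 : HasDerivAt (fun x : ℝ => a * x) a x := by
      simpa using (hasDerivAt_id x).const_mul a
    have h2 : HasDerivAt (fun x => Real.cos (a * x)) (-Real.sin (a * x) * a) x :=
      (Real.hasDerivAt_cos (a * x)).comp x h1
    have := h2.const_mul (A * a)
    exact this.congr_deriv (by ring)
  refine ⟨?_, ?_, by simp, ?_⟩
  · exact contDiff_const.mul (Real.contDiff_sin.comp (contDiff_const.mul contDiff_id))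
  · intro x
    rw [hderiv, (hD2 x).deriv, ← ha2]
    ring
  · rw [hderiv]; simp

/-- Explicit solution data: linear case. -/
lemma lin_sol (A : ℝ) :
    ContDiff ℝ (⊤ : ℕ∞) (fun x : ℝ => A * x) ∧
    (∀ x, deriv (deriv (fun x : ℝ => A * x)) x = 0) ∧
    (fun x : ℝ => A * x) 0 = 0 ∧
    deriv (fun x : ℝ => A * x) 0 = A := by
  have hderiv : deriv (fun x : ℝ => A * x) = fun _ => A := by
    funext x
    simpa using ((hasDerivAt_id x).const_mul A).deriv
  refine ⟨contDiff_const.mul contDiff_id, ?_, by simp, by simp [hderiv]⟩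
  intro x
  rw [hderiv]
  simp

/-- Case (1a)/(1b): for c ≥ 0 and f not identically zero solving the f-ODE system with
f(0) = 0, one has c > 0 and f = ε·S with ε = ±1, where S is the unique solution of the
linear IVP S″ = (c−d)S, S(0) = 0, S′(0) = √c; explicitly f is
±√(c/(c−d))·sinh(√(c−d)x) if c > d, ±√c·x if c = d, and ±√(c/(d−c))·sin(√(d−c)x) if c < d. -/
theorem fODE_explicit_solution_with_zero (c d : ℝ) (hc : 0 ≤ c)
    (f : ℝ → ℝ) (hf : ContDiff ℝ (⊤ : ℕ∞) f) (hf0 : ¬ (∀ x : ℝ, f x = 0))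
    (hode1 : ∀ x : ℝ, (deriv f x) ^ 2 = (c - d) * (f x) ^ 2 + c)
    (hode2 : ∀ x : ℝ, deriv (deriv f) x = (c - d) * f x)
    (hzero : f 0 = 0) :
    0 < c ∧
    ∃ ε : ℝ, (ε = -1 ∨ ε = 1) ∧
      (∀ S : ℝ → ℝ, ContDiff ℝ (⊤ : ℕ∞) S →
        (∀ x : ℝ, deriv (deriv S) x = (c - d) * S x) →
        S 0 = 0 → deriv S 0 = Real.sqrt c →
        ∀ x : ℝ, f x = ε * S x) ∧
      (c > d → ∀ x : ℝ,
        f x = ε * (Real.sqrt (c / (c - d)) * Real.sinh (Real.sqrt (c - d) * x))) ∧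
      (c = d → ∀ x : ℝ, f x = ε * (Real.sqrt c * x)) ∧
      (c < d → ∀ x : ℝ,
        f x = ε * (Real.sqrt (c / (d - c)) * Real.sin (Real.sqrt (d - c) * x))) := by
  have hfd : Differentiable ℝ f := hf.differentiable (by simp)
  have hfd' : Differentiable ℝ (deriv f) := contdiff_deriv hf
  have hf02 : (deriv f 0) ^ 2 = c := by
    have := hode1 0
    rw [hzero] at this
    simpa using this
  have hcpos : 0 < c := by
    rcases lt_or_eq_of_le hc with h | h
    · exact h
    · exfalso
      apply hf0
      have hd0 : deriv f 0 = 0 := by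
        have : (deriv f 0) ^ 2 = 0 := by rw [hf02, ← h]
        exact pow_eq_zero_iff (by norm_num) |>.mp this
      exact ode_zero (c - d) f hfd hfd' hode2 hzero hd0
  set ε : ℝ := if 0 ≤ deriv f 0 then 1 else -1 with hε
  have habs : |deriv f 0| = Real.sqrt c := by
    rw [← Real.sqrt_sq_eq_abs, hf02]
  have hd0 : deriv f 0 = ε * Real.sqrt c := by
    rw [hε]
    split_ifs with h
    · rw [one_mul, ← habs, abs_of_nonneg h]
    · rw [← habs, abs_of_neg (lt_of_not_ge h)]; ring
  have hε1 : ε = -1 ∨ ε = 1 := by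
    rw [hε]; split_ifs <;> simp
  -- the main uniqueness statement
  have main : ∀ S : ℝ → ℝ, ContDiff ℝ (⊤ : ℕ∞) S →
      (∀ x : ℝ, deriv (deriv S) x = (c - d) * S x) →
      S 0 = 0 → deriv S 0 = Real.sqrt c →
      ∀ x : ℝ, f x = ε * S x := by
    intro S hS hSode hS0 hS0'
    have hSd : Differentiable ℝ S := hS.differentiable (by simp)
    have hSd' : Differentiable ℝ (deriv S) := contdiff_deriv hS
    have hcd : ContDiff ℝ (⊤ : ℕ∞) (fun x => ε * S x) := contDiff_const.mul hS
    have hder : deriv (fun x => ε * S x) = fun x => ε * deriv S x := by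
      funext x
      exact (((hSd x).hasDerivAt).const_mul ε).deriv
    have hode : ∀ x, deriv (deriv (fun x => ε * S x)) x = (c - d) * (ε * S x) := by
      intro x
      rw [hder, (((hSd' x).hasDerivAt).const_mul ε).deriv, hSode x]
      ring
    exact ode_unique (c - d) f (fun x => ε * S x) hf hcd hode2 hode
      (by simp [hzero, hS0]) (by rw [hder, hd0]; simp [hS0'])
  refine ⟨hcpos, ε, hε1, main, ?_, ?_, ?_⟩
  · -- c > d : sinh case
    intro hcd x
    have hk : 0 < c - d := sub_pos.mpr hcd
    obtain ⟨h1, h2, h3, h4⟩ := sinh_sol (c - d) (Real.sqrt (c / (c - d))) hk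
    have hA : Real.sqrt (c / (c - d)) * Real.sqrt (c - d) = Real.sqrt c := by
      rw [← Real.sqrt_mul (div_nonneg hc hk.le), div_mul_cancel₀ _ hk.ne']
    exact main _ h1 h2 h3 (by rw [h4, hA]) x
  · -- c = d : linear case
    intro hcd x
    obtain ⟨h1, h2, h3, h4⟩ := lin_sol (Real.sqrt c)
    have h2' : ∀ x, deriv (deriv (fun x : ℝ => Real.sqrt c * x)) x
        = (c - d) * (Real.sqrt c * x) := by
      intro x; rw [h2 x, hcd]; ring
    exact main _ h1 h2' h3 h4 x
  · -- c < d : sin case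
    intro hcd x
    have hm : 0 < d - c := sub_pos.mpr hcd
    obtain ⟨h1, h2, h3, h4⟩ := sin_sol (d - c) (Real.sqrt (c / (d - c))) hm
    have h2' : ∀ y, deriv (deriv (fun x => Real.sqrt (c / (d - c))
        * Real.sin (Real.sqrt (d - c) * x))) y
        = (c - d) * (Real.sqrt (c / (d - c)) * Real.sin (Real.sqrt (d - c) * y)) := by
      intro y; rw [h2 y]; ring
    have hA : Real.sqrt (c / (d - c)) * Real.sqrt (d - c) = Real.sqrt c := by
      rw [← Real.sqrt_mul (div_nonneg hc hm.le), div_mul_cancel₀ _ hm.ne']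
    exact main _ h1 h2' h3 (by rw [h4, hA]) x
end
end

section
/- Let Ω ⊆ ℝ² be open and connected, let (F, N, ρ) be a Gauss–Weingarten triple on Ω, and assume ρ satisfies ρ·(ρ_xx − ρ_yy) − (ρ_x² − ρ_y²) − 1 = 0 and ρ_xy = 0 on Ω. Define m := ρ⁻²·(F_x ⊠ F_xx), n := ρ⁻²·(F_y ⊠ F_yy), and the vector fields v₁ := −(ρ_x/ρ)N − ((ρ_xx·ρ − ρ_x²)/ρ²)F_x + (ρ_x·ρ_y/ρ²)F_y and v₂ := (ρ_y/ρ)N − (ρ_x·ρ_y/ρ²)F_x + ((ρ_yy·ρ − ρ_y²)/ρ²)F_y. Then: (a) v₁ and v₂ are constant maps on Ω (all their partial derivatives vanish); (b) ⟨m, v₁⟩ = 0 and ⟨m_y, v₁⟩ = 0 on Ω; (c) ⟨n, v₂⟩ = 0 and ⟨n_x, v₂⟩ = 0 on Ω; (d) ⟨v₁, v₂⟩ = 0. -/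
noncomputable section

/-- Minkowski inner product on ℝ^{2,1} = ℝ³, coordinates (ξ₁, ξ₂, ξ₀). -/
def mink (a b : ℝ × ℝ × ℝ) : ℝ := a.1 * b.1 + a.2.1 * b.2.1 - a.2.2 * b.2.2

/-- Determinant of the 3×3 matrix with columns a, b, c. -/
def det3 (a b c : ℝ × ℝ × ℝ) : ℝ :=
  a.1 * (b.2.1 * c.2.2 - b.2.2 * c.2.1)
  - b.1 * (a.2.1 * c.2.2 - a.2.2 * c.2.1)
  + c.1 * (a.2.1 * b.2.2 - a.2.2 * b.2.1)

/-- The Lorentzian cross product on ℝ^{2,1}: the unique vector with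
⟨a ⊠ b, w⟩ = det(a, b, w) for all w. -/
def lcross (a b : ℝ × ℝ × ℝ) : ℝ × ℝ × ℝ :=
  (a.2.1 * b.2.2 - a.2.2 * b.2.1, a.2.2 * b.1 - a.1 * b.2.2, a.2.1 * b.1 - a.1 * b.2.1)

/-- Partial derivative in the first (x) variable. -/
def pdx {E : Type*} [NormedAddCommGroup E] [NormedSpace ℝ E]
    (f : ℝ × ℝ → E) (p : ℝ × ℝ) : E :=
  deriv (fun t => f (t, p.2)) p.1

/-- Partial derivative in the second (y) variable. -/
def pdy {E : Type*} [NormedAddCommGroup E] [NormedSpace ℝ E]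
    (f : ℝ × ℝ → E) (p : ℝ × ℝ) : E :=
  deriv (fun t => f (p.1, t)) p.2

/-- m := ρ⁻²·(F_x ⊠ F_xx). -/
def mField (F : ℝ × ℝ → ℝ × ℝ × ℝ) (ρ : ℝ × ℝ → ℝ) (p : ℝ × ℝ) : ℝ × ℝ × ℝ :=
  ((ρ p) ^ 2)⁻¹ • lcross (pdx F p) (pdx (pdx F) p)

/-- n := ρ⁻²·(F_y ⊠ F_yy). -/
def nField (F : ℝ × ℝ → ℝ × ℝ × ℝ) (ρ : ℝ × ℝ → ℝ) (p : ℝ × ℝ) : ℝ × ℝ × ℝ :=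
  ((ρ p) ^ 2)⁻¹ • lcross (pdy F p) (pdy (pdy F) p)

/-- The first axial direction v₁. -/
def axialV1 (F N : ℝ × ℝ → ℝ × ℝ × ℝ) (ρ : ℝ × ℝ → ℝ) (p : ℝ × ℝ) : ℝ × ℝ × ℝ :=
  -((pdx ρ p / ρ p) • N p)
  - ((pdx (pdx ρ) p * ρ p - (pdx ρ p) ^ 2) / (ρ p) ^ 2) • pdx F p
  + ((pdx ρ p * pdy ρ p) / (ρ p) ^ 2) • pdy F p

/-- The second axial direction v₂. -/
def axialV2 (F N : ℝ × ℝ → ℝ × ℝ × ℝ) (ρ : ℝ × ℝ → ℝ) (p : ℝ × ℝ) : ℝ × ℝ × ℝ :=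
  (pdy ρ p / ρ p) • N p
  - ((pdx ρ p * pdy ρ p) / (ρ p) ^ 2) • pdx F p
  + ((pdy (pdy ρ) p * ρ p - (pdy ρ p) ^ 2) / (ρ p) ^ 2) • pdy F p

open Filter Topology

namespace AxialAux

variable {E F' : Type*} [NormedAddCommGroup E] [NormedSpace ℝ E]
  [NormedAddCommGroup F'] [NormedSpace ℝ F']

lemma diff_sx {f : ℝ × ℝ → E} {x y : ℝ} (hf : DifferentiableAt ℝ f (x, y)) :
    DifferentiableAt ℝ (fun t => f (t, y)) x :=
  hf.comp x ((differentiableAt_id).prodMk (differentiableAt_const _))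

lemma diff_sy {f : ℝ × ℝ → E} {x y : ℝ} (hf : DifferentiableAt ℝ f (x, y)) :
    DifferentiableAt ℝ (fun t => f (x, t)) y :=
  hf.comp y ((differentiableAt_const _).prodMk (differentiableAt_id))

lemma hasDerivAt_sx {f : ℝ × ℝ → E} {x y : ℝ} (hf : DifferentiableAt ℝ f (x, y)) :
    HasDerivAt (fun t => f (t, y)) (pdx f (x, y)) x :=
  (diff_sx hf).hasDerivAt

lemma hasDerivAt_sy {f : ℝ × ℝ → E} {x y : ℝ} (hf : DifferentiableAt ℝ f (x, y)) :
    HasDerivAt (fun t => f (x, t)) (pdy f (x, y)) y :=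
  (diff_sy hf).hasDerivAt

lemma pdx_eq_fderiv {f : ℝ × ℝ → E} {p : ℝ × ℝ} (hf : DifferentiableAt ℝ f p) :
    pdx f p = fderiv ℝ f p (1, 0) := by
  obtain ⟨x, y⟩ := p
  have hline : HasDerivAt (fun t : ℝ => (t, y)) ((1 : ℝ), (0 : ℝ)) x :=
    (hasDerivAt_id x).prodMk (hasDerivAt_const x y)
  exact (hf.hasFDerivAt.comp_hasDerivAt x hline).deriv

lemma pdy_eq_fderiv {f : ℝ × ℝ → E} {p : ℝ × ℝ} (hf : DifferentiableAt ℝ f p) :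
    pdy f p = fderiv ℝ f p (0, 1) := by
  obtain ⟨x, y⟩ := p
  have hline : HasDerivAt (fun t : ℝ => (x, t)) ((0 : ℝ), (1 : ℝ)) y :=
    (hasDerivAt_const y x).prodMk (hasDerivAt_id y)
  exact (hf.hasFDerivAt.comp_hasDerivAt y hline).deriv

lemma pdx_congr {f g : ℝ × ℝ → E} {p : ℝ × ℝ} (h : f =ᶠ[𝓝 p] g) :
    pdx f p = pdx g p := by
  obtain ⟨x, y⟩ := p
  apply Filter.EventuallyEq.deriv_eq
  exact h.comp_tendsto (Continuous.tendsto (by fun_prop) x)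

lemma pdy_congr {f g : ℝ × ℝ → E} {p : ℝ × ℝ} (h : f =ᶠ[𝓝 p] g) :
    pdy f p = pdy g p := by
  obtain ⟨x, y⟩ := p
  apply Filter.EventuallyEq.deriv_eq
  exact h.comp_tendsto (Continuous.tendsto (by fun_prop) y)

lemma pdx_congr_on {Ω : Set (ℝ × ℝ)} (hΩ : IsOpen Ω) {f g : ℝ × ℝ → E}
    (h : ∀ q ∈ Ω, f q = g q) {p : ℝ × ℝ} (hp : p ∈ Ω) : pdx f p = pdx g p :=
  pdx_congr (Filter.eventuallyEq_of_mem (hΩ.mem_nhds hp) h)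

lemma pdy_congr_on {Ω : Set (ℝ × ℝ)} (hΩ : IsOpen Ω) {f g : ℝ × ℝ → E}
    (h : ∀ q ∈ Ω, f q = g q) {p : ℝ × ℝ} (hp : p ∈ Ω) : pdy f p = pdy g p :=
  pdy_congr (Filter.eventuallyEq_of_mem (hΩ.mem_nhds hp) h)

lemma pdx_const {c : E} {p : ℝ × ℝ} : pdx (fun _ => c) p = 0 := by simp [pdx]

lemma pdy_const {c : E} {p : ℝ × ℝ} : pdy (fun _ => c) p = 0 := by simp [pdy]

lemma contDiffAt_pdx {f : ℝ × ℝ → E} {p : ℝ × ℝ} (hf : ContDiffAt ℝ (⊤ : ℕ∞) f p) :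
    ContDiffAt ℝ (⊤ : ℕ∞) (pdx f) p := by
  have hev : ∀ᶠ q in 𝓝 p, DifferentiableAt ℝ f q := by
    have h1 : ContDiffAt ℝ 1 f p := hf.of_le (by simp)
    filter_upwards [h1.eventually (by simp)] with q hq using hq.differentiableAt one_ne_zero
  have heq : (fun q => fderiv ℝ f q (1, 0)) =ᶠ[𝓝 p] pdx f := by
    filter_upwards [hev] with q hq using (pdx_eq_fderiv hq).symm
  exact ((hf.fderiv_right (by simp)).clm_apply contDiffAt_const).congr_of_eventuallyEq heq.symm

lemma contDiffAt_pdy {f : ℝ × ℝ → E} {p : ℝ × ℝ} (hf : ContDiffAt ℝ (⊤ : ℕ∞) f p) :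
    ContDiffAt ℝ (⊤ : ℕ∞) (pdy f) p := by
  have hev : ∀ᶠ q in 𝓝 p, DifferentiableAt ℝ f q := by
    have h1 : ContDiffAt ℝ 1 f p := hf.of_le (by simp)
    filter_upwards [h1.eventually (by simp)] with q hq using hq.differentiableAt one_ne_zero
  have heq : (fun q => fderiv ℝ f q (0, 1)) =ᶠ[𝓝 p] pdy f := by
    filter_upwards [hev] with q hq using (pdy_eq_fderiv hq).symm
  exact ((hf.fderiv_right (by simp)).clm_apply contDiffAt_const).congr_of_eventuallyEq heq.symm

lemma pdx_pdy_symm {f : ℝ × ℝ → E} {p : ℝ × ℝ} (hf : ContDiffAt ℝ (⊤ : ℕ∞) f p) :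
    pdx (pdy f) p = pdy (pdx f) p := by
  have hev : ∀ᶠ q in 𝓝 p, DifferentiableAt ℝ f q := by
    have h1 : ContDiffAt ℝ 1 f p := hf.of_le (by simp)
    filter_upwards [h1.eventually (by simp)] with q hq using hq.differentiableAt one_ne_zero
  have hΦ : DifferentiableAt ℝ (fderiv ℝ f) p :=
    (hf.fderiv_right (m := 1) (WithTop.coe_le_coe.mpr le_top)).differentiableAt one_ne_zero
  have hsymm := second_derivative_symmetric_of_eventually
    (f' := fderiv ℝ f) (f'' := fderiv ℝ (fderiv ℝ f) p)
    (hev.mono fun q hq => hq.hasFDerivAt) hΦ.hasFDerivAt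
  have h1 : pdy f =ᶠ[𝓝 p] fun q => fderiv ℝ f q (0, 1) := by
    filter_upwards [hev] with q hq using pdy_eq_fderiv hq
  have h2 : pdx f =ᶠ[𝓝 p] fun q => fderiv ℝ f q (1, 0) := by
    filter_upwards [hev] with q hq using pdx_eq_fderiv hq
  have e1 : pdx (pdy f) p = fderiv ℝ (fderiv ℝ f) p (1, 0) (0, 1) := by
    rw [pdx_congr h1, pdx_eq_fderiv (hΦ.clm_apply (differentiableAt_const _)),
      fderiv_clm_apply hΦ (differentiableAt_const _)]
    simp
  have e2 : pdy (pdx f) p = fderiv ℝ (fderiv ℝ f) p (0, 1) (1, 0) := by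
    rw [pdy_congr h2, pdy_eq_fderiv (hΦ.clm_apply (differentiableAt_const _)),
      fderiv_clm_apply hΦ (differentiableAt_const _)]
    simp
  rw [e1, e2, hsymm]

lemma hfst {f : ℝ → E × F'} {f' : E × F'} {t : ℝ} (h : HasDerivAt f f' t) :
    HasDerivAt (fun s => (f s).1) f'.1 t :=
  (ContinuousLinearMap.fst ℝ E F').hasFDerivAt.comp_hasDerivAt t h

lemma hsnd {f : ℝ → E × F'} {f' : E × F'} {t : ℝ} (h : HasDerivAt f f' t) :
    HasDerivAt (fun s => (f s).2) f'.2 t :=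
  (ContinuousLinearMap.snd ℝ E F').hasFDerivAt.comp_hasDerivAt t h

lemma hasDerivAt_lcross {f g : ℝ → ℝ × ℝ × ℝ} {f' g' : ℝ × ℝ × ℝ} {t : ℝ}
    (hf : HasDerivAt f f' t) (hg : HasDerivAt g g' t) :
    HasDerivAt (fun s => lcross (f s) (g s)) (lcross f' (g t) + lcross (f t) g') t := by
  have h1 := ((hfst (hsnd hf)).mul (hsnd (hsnd hg))).sub ((hsnd (hsnd hf)).mul (hfst (hsnd hg)))
  have h2 := ((hsnd (hsnd hf)).mul (hfst hg)).sub ((hfst hf).mul (hsnd (hsnd hg)))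
  have h3 := ((hfst (hsnd hf)).mul (hfst hg)).sub ((hfst hf).mul (hfst (hsnd hg)))
  convert h1.prodMk (h2.prodMk h3) using 1
  · funext s; rfl
  refine Prod.ext ?_ (Prod.ext ?_ ?_) <;> simp [lcross] <;> ring

lemma mink_comm (a b : ℝ × ℝ × ℝ) : mink a b = mink b a := by simp [mink]; ring

lemma mink_comb (u v w : ℝ × ℝ × ℝ) (a b c a' b' c' : ℝ) :
    mink (-(a • u) - b • v + c • w) (a' • u - b' • v + c' • w)
    = (-(a * a')) * mink u u + (a * b') * mink u v + (-(a * c')) * mink u w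
      + (-(b * a')) * mink v u + (b * b') * mink v v + (-(b * c')) * mink v w
      + (c * a') * mink w u + (-(c * b')) * mink w v + (c * c') * mink w w := by
  simp only [mink, Prod.fst_add, Prod.snd_add, Prod.fst_sub, Prod.snd_sub, Prod.fst_neg,
    Prod.snd_neg, Prod.smul_fst, Prod.smul_snd, smul_eq_mul]
  ring

end AxialAux

set_option maxHeartbeats 2000000 in
/-- Existence of axial directions for timelike minimal surfaces with planar curvature
lines: v₁ and v₂ are constant, ⟨m, v₁⟩ = ⟨m_y, v₁⟩ = 0, ⟨n, v₂⟩ = ⟨n_x, v₂⟩ = 0 and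
⟨v₁, v₂⟩ = 0 on Ω. -/
theorem axial_directions
    (Ω : Set (ℝ × ℝ)) (hΩ : IsOpen Ω) (hΩconn : IsConnected Ω)
    (F N : ℝ × ℝ → ℝ × ℝ × ℝ) (ρ : ℝ × ℝ → ℝ)
    (hF : ContDiffOn ℝ (⊤ : ℕ∞) F Ω) (hN : ContDiffOn ℝ (⊤ : ℕ∞) N Ω) (hρ : ContDiffOn ℝ (⊤ : ℕ∞) ρ Ω)
    (hρpos : ∀ p ∈ Ω, 0 < ρ p)
    (hFx : ∀ p ∈ Ω, mink (pdx F p) (pdx F p) = (ρ p) ^ 2)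
    (hFy : ∀ p ∈ Ω, mink (pdy F p) (pdy F p) = -(ρ p) ^ 2)
    (hFxFy : ∀ p ∈ Ω, mink (pdx F p) (pdy F p) = 0)
    (hNN : ∀ p ∈ Ω, mink (N p) (N p) = 1)
    (hNFx : ∀ p ∈ Ω, mink (N p) (pdx F p) = 0)
    (hNFy : ∀ p ∈ Ω, mink (N p) (pdy F p) = 0)
    (hFxx : ∀ p ∈ Ω, pdx (pdx F) p
      = -N p + (pdx ρ p / ρ p) • pdx F p + (pdy ρ p / ρ p) • pdy F p)
    (hFyy : ∀ p ∈ Ω, pdy (pdy F) p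
      = -N p + (pdx ρ p / ρ p) • pdx F p + (pdy ρ p / ρ p) • pdy F p)
    (hFxy : ∀ p ∈ Ω, pdy (pdx F) p
      = (pdy ρ p / ρ p) • pdx F p + (pdx ρ p / ρ p) • pdy F p)
    (hNx : ∀ p ∈ Ω, pdx N p = ((ρ p) ^ 2)⁻¹ • pdx F p)
    (hNy : ∀ p ∈ Ω, pdy N p = -(((ρ p) ^ 2)⁻¹) • pdy F p)
    (hpde1 : ∀ p ∈ Ω,
      ρ p * (pdx (pdx ρ) p - pdy (pdy ρ) p) - ((pdx ρ p) ^ 2 - (pdy ρ p) ^ 2) - 1 = 0)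
    (hpde2 : ∀ p ∈ Ω, pdy (pdx ρ) p = 0) :
    (∀ p ∈ Ω, pdx (axialV1 F N ρ) p = 0 ∧ pdy (axialV1 F N ρ) p = 0 ∧
      pdx (axialV2 F N ρ) p = 0 ∧ pdy (axialV2 F N ρ) p = 0) ∧
    (∀ p ∈ Ω, mink (mField F ρ p) (axialV1 F N ρ p) = 0 ∧
      mink (pdy (mField F ρ) p) (axialV1 F N ρ p) = 0) ∧
    (∀ p ∈ Ω, mink (nField F ρ p) (axialV2 F N ρ p) = 0 ∧
      mink (pdx (nField F ρ) p) (axialV2 F N ρ p) = 0) ∧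
    (∀ p ∈ Ω, mink (axialV1 F N ρ p) (axialV2 F N ρ p) = 0) := by
  classical
  open AxialAux in
  -- nonvanishing
  have hne : ∀ q ∈ Ω, ρ q ≠ 0 := fun q hq => ne_of_gt (hρpos q hq)
  have hne2 : ∀ q ∈ Ω, (ρ q) ^ 2 ≠ 0 := fun q hq => pow_ne_zero 2 (hne q hq)
  -- smoothness of atoms
  have cρ : ∀ q ∈ Ω, ContDiffAt ℝ (⊤ : ℕ∞) ρ q := fun q hq => hρ.contDiffAt (hΩ.mem_nhds hq)
  have cF : ∀ q ∈ Ω, ContDiffAt ℝ (⊤ : ℕ∞) F q := fun q hq => hF.contDiffAt (hΩ.mem_nhds hq)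
  have cN : ∀ q ∈ Ω, ContDiffAt ℝ (⊤ : ℕ∞) N q := fun q hq => hN.contDiffAt (hΩ.mem_nhds hq)
  have cρx : ∀ q ∈ Ω, ContDiffAt ℝ (⊤ : ℕ∞) (pdx ρ) q := fun q hq => contDiffAt_pdx (cρ q hq)
  have cρy : ∀ q ∈ Ω, ContDiffAt ℝ (⊤ : ℕ∞) (pdy ρ) q := fun q hq => contDiffAt_pdy (cρ q hq)
  have dρ : ∀ q ∈ Ω, DifferentiableAt ℝ ρ q := fun q hq => (cρ q hq).differentiableAt (by simp)
  have dρx : ∀ q ∈ Ω, DifferentiableAt ℝ (pdx ρ) q :=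
    fun q hq => (cρx q hq).differentiableAt (by simp)
  have dρy : ∀ q ∈ Ω, DifferentiableAt ℝ (pdy ρ) q :=
    fun q hq => (cρy q hq).differentiableAt (by simp)
  have dρxx : ∀ q ∈ Ω, DifferentiableAt ℝ (pdx (pdx ρ)) q :=
    fun q hq => (contDiffAt_pdx (cρx q hq)).differentiableAt (by simp)
  have dρyy : ∀ q ∈ Ω, DifferentiableAt ℝ (pdy (pdy ρ)) q :=
    fun q hq => (contDiffAt_pdy (cρy q hq)).differentiableAt (by simp)
  have dF : ∀ q ∈ Ω, DifferentiableAt ℝ F q := fun q hq => (cF q hq).differentiableAt (by simp)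
  have dN : ∀ q ∈ Ω, DifferentiableAt ℝ N q := fun q hq => (cN q hq).differentiableAt (by simp)
  have dFx : ∀ q ∈ Ω, DifferentiableAt ℝ (pdx F) q :=
    fun q hq => (contDiffAt_pdx (cF q hq)).differentiableAt (by simp)
  have dFy : ∀ q ∈ Ω, DifferentiableAt ℝ (pdy F) q :=
    fun q hq => (contDiffAt_pdy (cF q hq)).differentiableAt (by simp)
  have dFxx : ∀ q ∈ Ω, DifferentiableAt ℝ (pdx (pdx F)) q :=
    fun q hq => (contDiffAt_pdx (contDiffAt_pdx (cF q hq))).differentiableAt (by simp)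
  have dFyy : ∀ q ∈ Ω, DifferentiableAt ℝ (pdy (pdy F)) q :=
    fun q hq => (contDiffAt_pdy (contDiffAt_pdy (cF q hq))).differentiableAt (by simp)
  -- Schwarz symmetry facts
  have hmix : ∀ q ∈ Ω, pdx (pdy ρ) q = 0 :=
    fun q hq => (pdx_pdy_symm (cρ q hq)).trans (hpde2 q hq)
  have hFyx : ∀ q ∈ Ω, pdx (pdy F) q = pdy (pdx F) q := fun q hq => pdx_pdy_symm (cF q hq)
  have hrxxy : ∀ q ∈ Ω, pdy (pdx (pdx ρ)) q = 0 := by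
    intro q hq
    rw [← pdx_pdy_symm (cρx q hq),
      pdx_congr_on hΩ (g := fun _ => (0 : ℝ)) hpde2 hq]
    exact pdx_const
  have hryyx : ∀ q ∈ Ω, pdx (pdy (pdy ρ)) q = 0 := by
    intro q hq
    rw [pdx_pdy_symm (cρy q hq),
      pdy_congr_on hΩ (g := fun _ => (0 : ℝ)) hmix hq]
    exact pdy_const
  -- third derivatives of ρ from differentiating the PDE
  have hkey1 : ∀ q ∈ Ω, ρ q * pdx (pdx (pdx ρ)) q
      = pdx ρ q * (pdx (pdx ρ) q + pdy (pdy ρ) q) := by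
    intro q hq
    obtain ⟨x, y⟩ := q
    have hD := ((((hasDerivAt_sx (dρ _ hq)).mul
        ((hasDerivAt_sx (dρxx _ hq)).sub (hasDerivAt_sx (dρyy _ hq)))).sub
        (((hasDerivAt_sx (dρx _ hq)).pow 2).sub ((hasDerivAt_sx (dρy _ hq)).pow 2))).sub_const 1)
    have e1 : pdx (fun q' => ρ q' * (pdx (pdx ρ) q' - pdy (pdy ρ) q')
        - ((pdx ρ q') ^ 2 - (pdy ρ q') ^ 2) - 1) (x, y) = _ := hD.deriv
    have e0 : pdx (fun q' => ρ q' * (pdx (pdx ρ) q' - pdy (pdy ρ) q')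
        - ((pdx ρ q') ^ 2 - (pdy ρ q') ^ 2) - 1) (x, y) = 0 :=
      (pdx_congr_on hΩ (g := fun _ => (0 : ℝ)) hpde1 hq).trans pdx_const
    rw [e0] at e1
    beta_reduce at e1
    simp only [Pi.sub_apply, Pi.add_apply, Pi.mul_apply, Pi.neg_apply, Pi.smul_apply', Pi.div_apply, Pi.pow_apply, Pi.inv_apply] at e1
    rw [hmix _ hq, hryyx _ hq] at e1
    linear_combination -e1
  have hkey2 : ∀ q ∈ Ω, ρ q * pdy (pdy (pdy ρ)) q
      = pdy ρ q * (pdx (pdx ρ) q + pdy (pdy ρ) q) := by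
    intro q hq
    obtain ⟨x, y⟩ := q
    have hD := ((((hasDerivAt_sy (dρ _ hq)).mul
        ((hasDerivAt_sy (dρxx _ hq)).sub (hasDerivAt_sy (dρyy _ hq)))).sub
        (((hasDerivAt_sy (dρx _ hq)).pow 2).sub ((hasDerivAt_sy (dρy _ hq)).pow 2))).sub_const 1)
    have e1 : pdy (fun q' => ρ q' * (pdx (pdx ρ) q' - pdy (pdy ρ) q')
        - ((pdx ρ q') ^ 2 - (pdy ρ q') ^ 2) - 1) (x, y) = _ := hD.deriv
    have e0 : pdy (fun q' => ρ q' * (pdx (pdx ρ) q' - pdy (pdy ρ) q')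
        - ((pdx ρ q') ^ 2 - (pdy ρ q') ^ 2) - 1) (x, y) = 0 :=
      (pdy_congr_on hΩ (g := fun _ => (0 : ℝ)) hpde1 hq).trans pdy_const
    rw [e0] at e1
    beta_reduce at e1
    simp only [Pi.sub_apply, Pi.add_apply, Pi.mul_apply, Pi.neg_apply, Pi.smul_apply', Pi.div_apply, Pi.pow_apply, Pi.inv_apply] at e1
    rw [hpde2 _ hq, hrxxy _ hq] at e1
    linear_combination e1
  -- division forms
  have hrxx_div : ∀ q ∈ Ω, pdx (pdx ρ) q
      = ((pdx ρ q) ^ 2 - (pdy ρ q) ^ 2 + 1) / ρ q + pdy (pdy ρ) q := by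
    intro q hq
    have h0 := hne _ hq
    field_simp
    linear_combination hpde1 q hq
  have hxxx_div : ∀ q ∈ Ω, pdx (pdx (pdx ρ)) q
      = pdx ρ q * (pdx (pdx ρ) q + pdy (pdy ρ) q) / ρ q := by
    intro q hq
    have h0 := hne _ hq
    field_simp
    linear_combination hkey1 q hq
  have hyyy_div : ∀ q ∈ Ω, pdy (pdy (pdy ρ)) q
      = pdy ρ q * (pdx (pdx ρ) q + pdy (pdy ρ) q) / ρ q := by
    intro q hq
    have h0 := hne _ hq
    field_simp
    linear_combination hkey2 q hq
  -- mixed third derivatives of F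
  have hFxxy : ∀ q ∈ Ω, pdy (pdx (pdx F)) q
      = -pdy N q + ((pdy (pdx ρ) q * ρ q - pdx ρ q * pdy ρ q) / ρ q ^ 2) • pdx F q
        + (pdx ρ q / ρ q) • pdy (pdx F) q
        + ((pdy (pdy ρ) q * ρ q - pdy ρ q * pdy ρ q) / ρ q ^ 2) • pdy F q
        + (pdy ρ q / ρ q) • pdy (pdy F) q := by
    intro q hq
    obtain ⟨x, y⟩ := q
    have hD := (((hasDerivAt_sy (dN _ hq)).neg.add
        (((hasDerivAt_sy (dρx _ hq)).div (hasDerivAt_sy (dρ _ hq)) (hne _ hq)).smul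
          (hasDerivAt_sy (dFx _ hq)))).add
        (((hasDerivAt_sy (dρy _ hq)).div (hasDerivAt_sy (dρ _ hq)) (hne _ hq)).smul
          (hasDerivAt_sy (dFy _ hq))))
    have e1 : pdy (fun q' => -N q' + (pdx ρ q' / ρ q') • pdx F q'
        + (pdy ρ q' / ρ q') • pdy F q') (x, y) = _ := hD.deriv
    beta_reduce at e1
    simp only [Pi.sub_apply, Pi.add_apply, Pi.mul_apply, Pi.neg_apply, Pi.smul_apply', Pi.div_apply, Pi.pow_apply, Pi.inv_apply] at e1
    rw [pdy_congr_on hΩ hFxx hq, e1]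
    match_scalars <;> ring
  have hFyyx : ∀ q ∈ Ω, pdx (pdy (pdy F)) q
      = -pdx N q + ((pdx (pdx ρ) q * ρ q - pdx ρ q * pdx ρ q) / ρ q ^ 2) • pdx F q
        + (pdx ρ q / ρ q) • pdx (pdx F) q
        + ((pdx (pdy ρ) q * ρ q - pdy ρ q * pdx ρ q) / ρ q ^ 2) • pdy F q
        + (pdy ρ q / ρ q) • pdx (pdy F) q := by
    intro q hq
    obtain ⟨x, y⟩ := q
    have hD := (((hasDerivAt_sx (dN _ hq)).neg.add
        (((hasDerivAt_sx (dρx _ hq)).div (hasDerivAt_sx (dρ _ hq)) (hne _ hq)).smul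
          (hasDerivAt_sx (dFx _ hq)))).add
        (((hasDerivAt_sx (dρy _ hq)).div (hasDerivAt_sx (dρ _ hq)) (hne _ hq)).smul
          (hasDerivAt_sx (dFy _ hq))))
    have e1 : pdx (fun q' => -N q' + (pdx ρ q' / ρ q') • pdx F q'
        + (pdy ρ q' / ρ q') • pdy F q') (x, y) = _ := hD.deriv
    beta_reduce at e1
    simp only [Pi.sub_apply, Pi.add_apply, Pi.mul_apply, Pi.neg_apply, Pi.smul_apply', Pi.div_apply, Pi.pow_apply, Pi.inv_apply] at e1
    rw [pdx_congr_on hΩ hFyy hq, e1]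
    match_scalars <;> ring
  -- part (a)
  have gA1 : ∀ q ∈ Ω, pdx (axialV1 F N ρ) q = 0 := by
    intro q hq
    obtain ⟨x, y⟩ := q
    have h0 := hne _ hq
    have hD := ((((hasDerivAt_sx (dρx _ hq)).div (hasDerivAt_sx (dρ _ hq)) (hne _ hq)).smul
        (hasDerivAt_sx (dN _ hq))).neg.sub
        (((((hasDerivAt_sx (dρxx _ hq)).mul (hasDerivAt_sx (dρ _ hq))).sub
          ((hasDerivAt_sx (dρx _ hq)).pow 2)).div
          ((hasDerivAt_sx (dρ _ hq)).pow 2) (hne2 _ hq)).smul (hasDerivAt_sx (dFx _ hq)))).add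
        ((((hasDerivAt_sx (dρx _ hq)).mul (hasDerivAt_sx (dρy _ hq))).div
          ((hasDerivAt_sx (dρ _ hq)).pow 2) (hne2 _ hq)).smul (hasDerivAt_sx (dFy _ hq)))
    have e1 : pdx (axialV1 F N ρ) (x, y) = _ := hD.deriv
    beta_reduce at e1
    simp only [Pi.sub_apply, Pi.add_apply, Pi.mul_apply, Pi.neg_apply, Pi.smul_apply', Pi.div_apply, Pi.pow_apply, Pi.inv_apply] at e1
    rw [e1, hmix _ hq, hNx _ hq, hFxx _ hq, hFyx _ hq, hFxy _ hq, hxxx_div _ hq,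
      hrxx_div _ hq]
    match_scalars <;> (field_simp; try ring)
  have gA2 : ∀ q ∈ Ω, pdy (axialV1 F N ρ) q = 0 := by
    intro q hq
    obtain ⟨x, y⟩ := q
    have h0 := hne _ hq
    have hD := ((((hasDerivAt_sy (dρx _ hq)).div (hasDerivAt_sy (dρ _ hq)) (hne _ hq)).smul
        (hasDerivAt_sy (dN _ hq))).neg.sub
        (((((hasDerivAt_sy (dρxx _ hq)).mul (hasDerivAt_sy (dρ _ hq))).sub
          ((hasDerivAt_sy (dρx _ hq)).pow 2)).div
          ((hasDerivAt_sy (dρ _ hq)).pow 2) (hne2 _ hq)).smul (hasDerivAt_sy (dFx _ hq)))).add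
        ((((hasDerivAt_sy (dρx _ hq)).mul (hasDerivAt_sy (dρy _ hq))).div
          ((hasDerivAt_sy (dρ _ hq)).pow 2) (hne2 _ hq)).smul (hasDerivAt_sy (dFy _ hq)))
    have e1 : pdy (axialV1 F N ρ) (x, y) = _ := hD.deriv
    beta_reduce at e1
    simp only [Pi.sub_apply, Pi.add_apply, Pi.mul_apply, Pi.neg_apply, Pi.smul_apply', Pi.div_apply, Pi.pow_apply, Pi.inv_apply] at e1
    rw [e1, hpde2 _ hq, hrxxy _ hq, hNy _ hq, hFxy _ hq, hFyy _ hq, hrxx_div _ hq]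
    match_scalars <;> (field_simp; try ring)
  have gA3 : ∀ q ∈ Ω, pdx (axialV2 F N ρ) q = 0 := by
    intro q hq
    obtain ⟨x, y⟩ := q
    have h0 := hne _ hq
    have hD := ((((hasDerivAt_sx (dρy _ hq)).div (hasDerivAt_sx (dρ _ hq)) (hne _ hq)).smul
        (hasDerivAt_sx (dN _ hq))).sub
        ((((hasDerivAt_sx (dρx _ hq)).mul (hasDerivAt_sx (dρy _ hq))).div
          ((hasDerivAt_sx (dρ _ hq)).pow 2) (hne2 _ hq)).smul (hasDerivAt_sx (dFx _ hq)))).add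
        (((((hasDerivAt_sx (dρyy _ hq)).mul (hasDerivAt_sx (dρ _ hq))).sub
          ((hasDerivAt_sx (dρy _ hq)).pow 2)).div
          ((hasDerivAt_sx (dρ _ hq)).pow 2) (hne2 _ hq)).smul (hasDerivAt_sx (dFy _ hq)))
    have e1 : pdx (axialV2 F N ρ) (x, y) = _ := hD.deriv
    beta_reduce at e1
    simp only [Pi.sub_apply, Pi.add_apply, Pi.mul_apply, Pi.neg_apply, Pi.smul_apply', Pi.div_apply, Pi.pow_apply, Pi.inv_apply] at e1
    rw [e1, hmix _ hq, hryyx _ hq, hNx _ hq, hFxx _ hq, hFyx _ hq, hFxy _ hq,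
      hrxx_div _ hq]
    match_scalars <;> (field_simp; try ring)
  have gA4 : ∀ q ∈ Ω, pdy (axialV2 F N ρ) q = 0 := by
    intro q hq
    obtain ⟨x, y⟩ := q
    have h0 := hne _ hq
    have hD := ((((hasDerivAt_sy (dρy _ hq)).div (hasDerivAt_sy (dρ _ hq)) (hne _ hq)).smul
        (hasDerivAt_sy (dN _ hq))).sub
        ((((hasDerivAt_sy (dρx _ hq)).mul (hasDerivAt_sy (dρy _ hq))).div
          ((hasDerivAt_sy (dρ _ hq)).pow 2) (hne2 _ hq)).smul (hasDerivAt_sy (dFx _ hq)))).add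
        (((((hasDerivAt_sy (dρyy _ hq)).mul (hasDerivAt_sy (dρ _ hq))).sub
          ((hasDerivAt_sy (dρy _ hq)).pow 2)).div
          ((hasDerivAt_sy (dρ _ hq)).pow 2) (hne2 _ hq)).smul (hasDerivAt_sy (dFy _ hq)))
    have e1 : pdy (axialV2 F N ρ) (x, y) = _ := hD.deriv
    beta_reduce at e1
    simp only [Pi.sub_apply, Pi.add_apply, Pi.mul_apply, Pi.neg_apply, Pi.smul_apply', Pi.div_apply, Pi.pow_apply, Pi.inv_apply] at e1
    rw [e1, hpde2 _ hq, hNy _ hq, hFxy _ hq, hFyy _ hq, hyyy_div _ hq, hrxx_div _ hq]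
    match_scalars <;> (field_simp; try ring)
  -- part (b)
  have gB1 : ∀ q ∈ Ω, mink (mField F ρ q) (axialV1 F N ρ q) = 0 := by
    intro q hq
    have h0 := hne _ hq
    simp only [mField, axialV1]
    rw [hFxx _ hq]
    simp only [mink, lcross, Prod.fst_add, Prod.snd_add, Prod.fst_sub, Prod.snd_sub,
      Prod.fst_neg, Prod.snd_neg, Prod.smul_fst, Prod.smul_snd, smul_eq_mul]
    field_simp
    ring
  have gB2 : ∀ q ∈ Ω, mink (pdy (mField F ρ) q) (axialV1 F N ρ q) = 0 := by
    intro q hq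
    obtain ⟨x, y⟩ := q
    have h0 := hne _ hq
    have hD := ((((hasDerivAt_sy (dρ _ hq)).pow 2).inv (hne2 _ hq)).smul
        (hasDerivAt_lcross (hasDerivAt_sy (dFx _ hq)) (hasDerivAt_sy (dFxx _ hq))))
    have e1 : pdy (mField F ρ) (x, y) = _ := hD.deriv
    beta_reduce at e1
    simp only [Pi.sub_apply, Pi.add_apply, Pi.mul_apply, Pi.neg_apply, Pi.smul_apply', Pi.div_apply, Pi.pow_apply, Pi.inv_apply] at e1
    rw [e1, hFxxy _ hq, hpde2 _ hq, hNy _ hq, hFxy _ hq, hFyy _ hq, hFxx _ hq]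
    simp only [axialV1]
    rw [hrxx_div _ hq]
    simp only [mink, lcross, Prod.fst_add, Prod.snd_add, Prod.fst_sub, Prod.snd_sub,
      Prod.fst_neg, Prod.snd_neg, Prod.smul_fst, Prod.smul_snd, smul_eq_mul]
    field_simp
    ring
  -- part (c)
  have gC1 : ∀ q ∈ Ω, mink (nField F ρ q) (axialV2 F N ρ q) = 0 := by
    intro q hq
    have h0 := hne _ hq
    simp only [nField, axialV2]
    rw [hFyy _ hq]
    simp only [mink, lcross, Prod.fst_add, Prod.snd_add, Prod.fst_sub, Prod.snd_sub,
      Prod.fst_neg, Prod.snd_neg, Prod.smul_fst, Prod.smul_snd, smul_eq_mul]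
    field_simp
    ring
  have gC2 : ∀ q ∈ Ω, mink (pdx (nField F ρ) q) (axialV2 F N ρ q) = 0 := by
    intro q hq
    obtain ⟨x, y⟩ := q
    have h0 := hne _ hq
    have hD := ((((hasDerivAt_sx (dρ _ hq)).pow 2).inv (hne2 _ hq)).smul
        (hasDerivAt_lcross (hasDerivAt_sx (dFy _ hq)) (hasDerivAt_sx (dFyy _ hq))))
    have e1 : pdx (nField F ρ) (x, y) = _ := hD.deriv
    beta_reduce at e1
    simp only [Pi.sub_apply, Pi.add_apply, Pi.mul_apply, Pi.neg_apply, Pi.smul_apply', Pi.div_apply, Pi.pow_apply, Pi.inv_apply] at e1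
    rw [e1, hFyyx _ hq, hmix _ hq, hNx _ hq, hFxx _ hq, hFyx _ hq, hFxy _ hq, hFyy _ hq]
    simp only [axialV2]
    rw [hrxx_div _ hq]
    simp only [mink, lcross, Prod.fst_add, Prod.snd_add, Prod.fst_sub, Prod.snd_sub,
      Prod.fst_neg, Prod.snd_neg, Prod.smul_fst, Prod.smul_snd, smul_eq_mul]
    field_simp
    ring
  -- part (d)
  have gD : ∀ q ∈ Ω, mink (axialV1 F N ρ q) (axialV2 F N ρ q) = 0 := by
    intro q hq
    have h0 := hne _ hq
    have m1 := hNN _ hq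
    have m2 := hFx _ hq
    have m3 := hFy _ hq
    have m4 := hFxFy _ hq
    have m5 := hNFx _ hq
    have m6 := hNFy _ hq
    simp only [axialV1, axialV2]
    rw [mink_comb, mink_comm (pdx F q) (N q), mink_comm (pdy F q) (N q),
      mink_comm (pdy F q) (pdx F q), m1, m2, m3, m4, m5, m6, hrxx_div _ hq]
    field_simp
    ring
  exact ⟨fun p hp => ⟨gA1 p hp, gA2 p hp, gA3 p hp, gA4 p hp⟩,
    fun p hp => ⟨gB1 p hp, gB2 p hp⟩, fun p hp => ⟨gC1 p hp, gC2 p hp⟩, gD⟩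
end
end

section
/- Let Ω = I × J ⊆ ℝ² with I, J open intervals, let (F, N, ρ) be a Gauss–Weingarten triple on Ω, and assume there are constants c, d ∈ ℝ and smooth functions f : I → ℝ, g : J → ℝ with ρ_x(x,y) = f(x), ρ_y(x,y) = g(y) on Ω, where f satisfies (f′)² = (c−d)f² + c, f″ = (c−d)f and g satisfies (g′)² = (c−d)g² + d, g″ = (c−d)g, and ρ·(ρ_xx − ρ_yy) − (ρ_x² − ρ_y²) − 1 = 0 on Ω. Then the axial directions v₁ := −(ρ_x/ρ)N − ((ρ_xx·ρ − ρ_x²)/ρ²)F_x + (ρ_x·ρ_y/ρ²)F_y and v₂ := (ρ_y/ρ)N − (ρ_x·ρ_y/ρ²)F_x + ((ρ_yy·ρ − ρ_y²)/ρ²)F_y satisfy ⟨v₁, v₁⟩ = c and ⟨v₂, v₂⟩ = −d at every point of Ω. -/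
noncomputable section

lemma mink_expand (α β γ : ℝ) (u v w : ℝ × ℝ × ℝ) :
    mink (α • u + β • v + γ • w) (α • u + β • v + γ • w)
      = α ^ 2 * mink u u + β ^ 2 * mink v v + γ ^ 2 * mink w w
        + 2 * α * β * mink u v + 2 * α * γ * mink u w + 2 * β * γ * mink v w := by
  simp only [mink, Prod.fst_add, Prod.snd_add, Prod.smul_fst, Prod.smul_snd, smul_eq_mul]
  ring

lemma key1 (r F G Fp Gp c d : ℝ) (hr : r ≠ 0)
    (hA : Fp ^ 2 = (c - d) * F ^ 2 + c)
    (hP : r * (Fp - Gp) - (F ^ 2 - G ^ 2) - 1 = 0)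
    (hQ : F * (Fp - Gp) + r * ((c - d) * F) - 2 * F * Fp = 0) :
    (-(F / r)) ^ 2 * 1 + (-((Fp * r - F ^ 2) / r ^ 2)) ^ 2 * r ^ 2
      + (F * G / r ^ 2) ^ 2 * (-r ^ 2)
      + 2 * (-(F / r)) * (-((Fp * r - F ^ 2) / r ^ 2)) * 0
      + 2 * (-(F / r)) * (F * G / r ^ 2) * 0
      + 2 * (-((Fp * r - F ^ 2) / r ^ 2)) * (F * G / r ^ 2) * 0 = c := by
  have h : F ^ 2 + (Fp * r - F ^ 2) ^ 2 - (F * G) ^ 2 = c * r ^ 2 := by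
    linear_combination F * r * hQ - F ^ 2 * hP + r ^ 2 * hA
  have hr2 : (r : ℝ) ^ 2 ≠ 0 := pow_ne_zero _ hr
  have e : (-(F / r)) ^ 2 * 1 + (-((Fp * r - F ^ 2) / r ^ 2)) ^ 2 * r ^ 2
      + (F * G / r ^ 2) ^ 2 * (-r ^ 2)
      + 2 * (-(F / r)) * (-((Fp * r - F ^ 2) / r ^ 2)) * 0
      + 2 * (-(F / r)) * (F * G / r ^ 2) * 0
      + 2 * (-((Fp * r - F ^ 2) / r ^ 2)) * (F * G / r ^ 2) * 0
      = (F ^ 2 + (Fp * r - F ^ 2) ^ 2 - (F * G) ^ 2) / r ^ 2 := by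
    field_simp
    ring
  rw [e, h, mul_div_assoc, div_self hr2, mul_one]

lemma key2 (r F G Fp Gp c d : ℝ) (hr : r ≠ 0)
    (hB : Gp ^ 2 = (c - d) * G ^ 2 + d)
    (hP : r * (Fp - Gp) - (F ^ 2 - G ^ 2) - 1 = 0)
    (hQ : G * (Fp - Gp) + r * (-((c - d) * G)) + 2 * G * Gp = 0) :
    (G / r) ^ 2 * 1 + (-(F * G / r ^ 2)) ^ 2 * r ^ 2
      + ((Gp * r - G ^ 2) / r ^ 2) ^ 2 * (-r ^ 2)
      + 2 * (G / r) * (-(F * G / r ^ 2)) * 0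
      + 2 * (G / r) * ((Gp * r - G ^ 2) / r ^ 2) * 0
      + 2 * (-(F * G / r ^ 2)) * ((Gp * r - G ^ 2) / r ^ 2) * 0 = -d := by
  have h : G ^ 2 + (F * G) ^ 2 - (Gp * r - G ^ 2) ^ 2 = -d * r ^ 2 := by
    linear_combination G * r * hQ - G ^ 2 * hP - r ^ 2 * hB
  have hr2 : (r : ℝ) ^ 2 ≠ 0 := pow_ne_zero _ hr
  have e : (G / r) ^ 2 * 1 + (-(F * G / r ^ 2)) ^ 2 * r ^ 2
      + ((Gp * r - G ^ 2) / r ^ 2) ^ 2 * (-r ^ 2)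
      + 2 * (G / r) * (-(F * G / r ^ 2)) * 0
      + 2 * (G / r) * ((Gp * r - G ^ 2) / r ^ 2) * 0
      + 2 * (-(F * G / r ^ 2)) * ((Gp * r - G ^ 2) / r ^ 2) * 0
      = (G ^ 2 + (F * G) ^ 2 - (Gp * r - G ^ 2) ^ 2) / r ^ 2 := by
    field_simp
    ring
  rw [e, h, mul_div_assoc, div_self hr2, mul_one]

/-- Causal character of the axial directions: ⟨v₁, v₁⟩ = c and ⟨v₂, v₂⟩ = −d. -/
theorem axial_directions_causal_character
    (I J : Set ℝ) (hI : IsOpen I) (hIc : I.OrdConnected)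
    (hJ : IsOpen J) (hJc : J.OrdConnected)
    (F N : ℝ × ℝ → ℝ × ℝ × ℝ) (ρ : ℝ × ℝ → ℝ)
    (hF : ContDiffOn ℝ (⊤ : ℕ∞) F (I ×ˢ J)) (hN : ContDiffOn ℝ (⊤ : ℕ∞) N (I ×ˢ J))
    (hρ : ContDiffOn ℝ (⊤ : ℕ∞) ρ (I ×ˢ J))
    (hρpos : ∀ p ∈ I ×ˢ J, 0 < ρ p)
    (hFx : ∀ p ∈ I ×ˢ J, mink (pdx F p) (pdx F p) = (ρ p) ^ 2)
    (hFy : ∀ p ∈ I ×ˢ J, mink (pdy F p) (pdy F p) = -(ρ p) ^ 2)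
    (hFxFy : ∀ p ∈ I ×ˢ J, mink (pdx F p) (pdy F p) = 0)
    (hNN : ∀ p ∈ I ×ˢ J, mink (N p) (N p) = 1)
    (hNFx : ∀ p ∈ I ×ˢ J, mink (N p) (pdx F p) = 0)
    (hNFy : ∀ p ∈ I ×ˢ J, mink (N p) (pdy F p) = 0)
    (hFxx : ∀ p ∈ I ×ˢ J, pdx (pdx F) p
      = -N p + (pdx ρ p / ρ p) • pdx F p + (pdy ρ p / ρ p) • pdy F p)
    (hFyy : ∀ p ∈ I ×ˢ J, pdy (pdy F) p
      = -N p + (pdx ρ p / ρ p) • pdx F p + (pdy ρ p / ρ p) • pdy F p)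
    (hFxy : ∀ p ∈ I ×ˢ J, pdy (pdx F) p
      = (pdy ρ p / ρ p) • pdx F p + (pdx ρ p / ρ p) • pdy F p)
    (hNx : ∀ p ∈ I ×ˢ J, pdx N p = ((ρ p) ^ 2)⁻¹ • pdx F p)
    (hNy : ∀ p ∈ I ×ˢ J, pdy N p = -(((ρ p) ^ 2)⁻¹) • pdy F p)
    (c d : ℝ) (f g : ℝ → ℝ)
    (hf : ContDiffOn ℝ (⊤ : ℕ∞) f I) (hg : ContDiffOn ℝ (⊤ : ℕ∞) g J)
    (hρx : ∀ x ∈ I, ∀ y ∈ J, pdx ρ (x, y) = f x)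
    (hρy : ∀ x ∈ I, ∀ y ∈ J, pdy ρ (x, y) = g y)
    (hf1 : ∀ x ∈ I, (deriv f x) ^ 2 = (c - d) * (f x) ^ 2 + c)
    (hf2 : ∀ x ∈ I, deriv (deriv f) x = (c - d) * f x)
    (hg1 : ∀ y ∈ J, (deriv g y) ^ 2 = (c - d) * (g y) ^ 2 + d)
    (hg2 : ∀ y ∈ J, deriv (deriv g) y = (c - d) * g y)
    (hpde1 : ∀ p ∈ I ×ˢ J,
      ρ p * (pdx (pdx ρ) p - pdy (pdy ρ) p) - ((pdx ρ p) ^ 2 - (pdy ρ p) ^ 2) - 1 = 0) :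
    ∀ p ∈ I ×ˢ J,
      mink (axialV1 F N ρ p) (axialV1 F N ρ p) = c ∧
      mink (axialV2 F N ρ p) (axialV2 F N ρ p) = -d := by
  -- second partials of ρ
  have hxx : ∀ x ∈ I, ∀ y ∈ J, pdx (pdx ρ) (x, y) = deriv f x := by
    intro x hx y hy
    have h : (fun t => pdx ρ (t, y)) =ᶠ[nhds x] f := by
      filter_upwards [hI.mem_nhds hx] with t ht using hρx t ht y hy
    exact h.deriv_eq
  have hyy : ∀ x ∈ I, ∀ y ∈ J, pdy (pdy ρ) (x, y) = deriv g y := by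
    intro x hx y hy
    have h : (fun t => pdy ρ (x, t)) =ᶠ[nhds y] g := by
      filter_upwards [hJ.mem_nhds hy] with t ht using hρy x hx t ht
    exact h.deriv_eq
  -- derivatives of ρ along coordinate lines
  have hlinex : ∀ x ∈ I, ∀ y ∈ J, HasDerivAt (fun t => ρ (t, y)) (f x) x := by
    intro x hx y hy
    have hdiff : DifferentiableAt ℝ ρ (x, y) :=
      (hρ.contDiffAt ((hI.prod hJ).mem_nhds ⟨hx, hy⟩)).differentiableAt (by simp)
    have h2 : DifferentiableAt ℝ (fun t : ℝ => ρ (t, y)) x :=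
      hdiff.comp x (differentiableAt_id.prodMk (differentiableAt_const y))
    have h3 := h2.hasDerivAt
    rwa [show deriv (fun t => ρ (t, y)) x = f x from hρx x hx y hy] at h3
  have hliney : ∀ x ∈ I, ∀ y ∈ J, HasDerivAt (fun t => ρ (x, t)) (g y) y := by
    intro x hx y hy
    have hdiff : DifferentiableAt ℝ ρ (x, y) :=
      (hρ.contDiffAt ((hI.prod hJ).mem_nhds ⟨hx, hy⟩)).differentiableAt (by simp)
    have h2 : DifferentiableAt ℝ (fun t : ℝ => ρ (x, t)) y :=
      hdiff.comp y ((differentiableAt_const x).prodMk differentiableAt_id)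
    have h3 := h2.hasDerivAt
    rwa [show deriv (fun t => ρ (x, t)) y = g y from hρy x hx y hy] at h3
  -- derivatives of f, g and their derivatives
  have hf' : ContDiffOn ℝ (⊤ : ℕ∞) (deriv f) I := hf.deriv_of_isOpen hI (by simp)
  have hg' : ContDiffOn ℝ (⊤ : ℕ∞) (deriv g) J := hg.deriv_of_isOpen hJ (by simp)
  have hdf : ∀ x ∈ I, HasDerivAt f (deriv f x) x := fun x hx =>
    ((hf.contDiffAt (hI.mem_nhds hx)).differentiableAt (by simp)).hasDerivAt
  have hdg : ∀ y ∈ J, HasDerivAt g (deriv g y) y := fun y hy =>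
    ((hg.contDiffAt (hJ.mem_nhds hy)).differentiableAt (by simp)).hasDerivAt
  have hdf' : ∀ x ∈ I, HasDerivAt (deriv f) ((c - d) * f x) x := by
    intro x hx
    have h := ((hf'.contDiffAt (hI.mem_nhds hx)).differentiableAt (by simp)).hasDerivAt
    rwa [hf2 x hx] at h
  have hdg' : ∀ y ∈ J, HasDerivAt (deriv g) ((c - d) * g y) y := by
    intro y hy
    have h := ((hg'.contDiffAt (hJ.mem_nhds hy)).differentiableAt (by simp)).hasDerivAt
    rwa [hg2 y hy] at h
  -- the PDE along coordinate lines
  have hpde : ∀ x ∈ I, ∀ y ∈ J,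
      ρ (x, y) * (deriv f x - deriv g y) - ((f x) ^ 2 - (g y) ^ 2) - 1 = 0 := by
    intro x hx y hy
    have h := hpde1 (x, y) ⟨hx, hy⟩
    rwa [hxx x hx y hy, hyy x hx y hy, hρx x hx y hy, hρy x hx y hy] at h
  rintro ⟨x, y⟩ hp
  have hx : x ∈ I := hp.1
  have hy : y ∈ J := hp.2
  have hr : ρ (x, y) ≠ 0 := (hρpos _ hp).ne'
  -- Q1 : x-derivative of the PDE
  have hQ1 : f x * (deriv f x - deriv g y) + ρ (x, y) * ((c - d) * f x)
      - 2 * f x * deriv f x = 0 := by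
    have hφ : HasDerivAt
        (fun t => ρ (t, y) * (deriv f t - deriv g y) - ((f t) ^ 2 - (g y) ^ 2) - 1)
        (f x * (deriv f x - deriv g y) + ρ (x, y) * ((c - d) * f x)
          - (2 * f x ^ (2 - 1) * deriv f x - 0) - 0) x := by
      exact ((((hlinex x hx y hy).mul ((hdf' x hx).sub_const (deriv g y))).sub
        (((hdf x hx).pow 2).sub (hasDerivAt_const x ((g y) ^ 2)))).sub
        (hasDerivAt_const x (1 : ℝ)))
    have h0 : (fun t => ρ (t, y) * (deriv f t - deriv g y) - ((f t) ^ 2 - (g y) ^ 2) - 1)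
        =ᶠ[nhds x] (fun _ => (0 : ℝ)) := by
      filter_upwards [hI.mem_nhds hx] with t ht using hpde t ht y hy
    have h := hφ.deriv
    rw [h0.deriv_eq, deriv_const] at h
    linear_combination -h
  -- Q2 : y-derivative of the PDE
  have hQ2 : g y * (deriv f x - deriv g y) + ρ (x, y) * (-((c - d) * g y))
      + 2 * g y * deriv g y = 0 := by
    have hψ : HasDerivAt
        (fun t => ρ (x, t) * (deriv f x - deriv g t) - ((f x) ^ 2 - (g t) ^ 2) - 1)
        (g y * (deriv f x - deriv g y) + ρ (x, y) * (0 - (c - d) * g y)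
          - (0 - 2 * g y ^ (2 - 1) * deriv g y) - 0) y := by
      exact ((((hliney x hx y hy).mul ((hasDerivAt_const y (deriv f x)).sub (hdg' y hy))).sub
        ((hasDerivAt_const y ((f x) ^ 2)).sub ((hdg y hy).pow 2))).sub
        (hasDerivAt_const y (1 : ℝ)))
    have h0 : (fun t => ρ (x, t) * (deriv f x - deriv g t) - ((f x) ^ 2 - (g t) ^ 2) - 1)
        =ᶠ[nhds y] (fun _ => (0 : ℝ)) := by
      filter_upwards [hJ.mem_nhds hy] with t ht using hpde x hx t ht
    have h := hψ.deriv
    rw [h0.deriv_eq, deriv_const] at h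
    linear_combination -h
  constructor
  · have hv1 : axialV1 F N ρ (x, y)
        = (-(pdx ρ (x, y) / ρ (x, y))) • N (x, y)
          + (-((pdx (pdx ρ) (x, y) * ρ (x, y) - (pdx ρ (x, y)) ^ 2) / (ρ (x, y)) ^ 2)) • pdx F (x, y)
          + ((pdx ρ (x, y) * pdy ρ (x, y)) / (ρ (x, y)) ^ 2) • pdy F (x, y) := by
      rw [axialV1]; module
    rw [hv1, mink_expand, hNN _ hp, hFx _ hp, hFy _ hp, hNFx _ hp, hNFy _ hp, hFxFy _ hp,
      hρx x hx y hy, hρy x hx y hy, hxx x hx y hy]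
    have := key1 (ρ (x, y)) (f x) (g y) (deriv f x) (deriv g y) c d hr
      (hf1 x hx) (hpde x hx y hy) hQ1
    linear_combination this
  · have hv2 : axialV2 F N ρ (x, y)
        = (pdy ρ (x, y) / ρ (x, y)) • N (x, y)
          + (-((pdx ρ (x, y) * pdy ρ (x, y)) / (ρ (x, y)) ^ 2)) • pdx F (x, y)
          + ((pdy (pdy ρ) (x, y) * ρ (x, y) - (pdy ρ (x, y)) ^ 2) / (ρ (x, y)) ^ 2) • pdy F (x, y) := by
      rw [axialV2]; module
    rw [hv2, mink_expand, hNN _ hp, hFx _ hp, hFy _ hp, hNFx _ hp, hNFy _ hp, hFxFy _ hp,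
      hρx x hx y hy, hρy x hx y hy, hyy x hx y hy]
    have := key2 (ρ (x, y)) (f x) (g y) (deriv f x) (deriv g y) c d hr
      (hg1 y hy) (hpde x hx y hy) hQ2
    linear_combination this
end
end
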